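/- arXiv:2604.24884 — 6 statements merged into one kernel-verified Lean document; each statement's English description precedes it below -/
import Mathlib

section
/- There exists a function n₀ : (0,1) → ℕ such that for every ε ∈ (0,1), every n ≥ n₀(ε), every d ≤ 20⁴/ε⁸ and every k ∈ [εn/(2d), 2n/(εd)], if B is drawn from LRR(n, d), then E[|N(G_k)|] ≥ (1 − 1/e + (ε/20)²⁴) · E[|N(O_k)|]. -/
open Finset

/-- One step of the greedy algorithm on the bipartite graph whose left nodes are
`Fin n`, right nodes are `Fin m`, and whose neighborhoods are given by `N`.
It adds to the current solution `S` the left node with largest marginal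
coverage `|N(u) \ N(S)|`, breaking ties by smallest index. -/
noncomputable def greedyStep {n m : ℕ} (N : Fin n → Finset (Fin m))
    (S : Finset (Fin n)) : Finset (Fin n) :=
  if h : (Finset.univ \ S).Nonempty then
    insert
      (((Finset.univ \ S).filter fun u =>
          ((N u) \ S.biUnion N).card =
            (Finset.univ \ S).sup fun v => ((N v) \ S.biUnion N).card).min'
        (by
          obtain ⟨u, hu, hsup⟩ :=
            Finset.exists_mem_eq_sup (Finset.univ \ S) h
              (fun v => ((N v) \ S.biUnion N).card)
          exact ⟨u, Finset.mem_filter.mpr ⟨hu, hsup.symm⟩⟩))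
      S
  else S

/-- The greedy solution after `k` iterations (`greedy N 0 = ∅`). -/
noncomputable def greedy {n m : ℕ} (N : Fin n → Finset (Fin m)) : ℕ → Finset (Fin n)
  | 0 => ∅
  | k + 1 => greedyStep N (greedy N k)

/-- The coverage `|N(O_k)|` of an optimal solution with cardinality constraint `k`. -/
def optValue {n m : ℕ} (N : Fin n → Finset (Fin m)) (k : ℕ) : ℕ :=
  (Finset.univ.powerset.filter fun S : Finset (Fin n) => S.card ≤ k).sup
    fun S => (S.biUnion N).card

/-- The sample space of the left-regular random model `LRR(n, d)`: all
neighborhood maps in which every left node has exactly `d` of the `n` right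
nodes as neighbors. -/
def lrrGraphs (n d : ℕ) : Finset (Fin n → Finset (Fin n)) :=
  Finset.univ.filter fun N => ∀ i, (N i).card = d

/-- Expectation of `f` under the left-regular random model `LRR(n, d)`
(uniform distribution on `lrrGraphs n d`). -/
noncomputable def lrrExp (n d : ℕ) (f : (Fin n → Finset (Fin n)) → ℝ) : ℝ :=
  (∑ N ∈ lrrGraphs n d, f N) / (lrrGraphs n d).card

open scoped Classical in
/-- Probability of the event `p` under the left-regular random model `LRR(n, d)`. -/
noncomputable def lrrProb (n d : ℕ) (p : (Fin n → Finset (Fin n)) → Prop) : ℝ :=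
  ((lrrGraphs n d).filter p).card / (lrrGraphs n d).card

/-!
Every neighbourhood has `d` nodes, so `|N(O_k)| ≤ kd`. Call a graph good (`ManyAvoid (m * d) m`)
if every set of `J = m d` right nodes, where `m = ⌊n / (8 d²)⌋`, is avoided by more than `m` left
nodes. On a good graph the first `t = min (m + 1) k` greedy picks cover `t d` right nodes, and
the recursion `OPT - |N(G_{s+1})| ≤ (1 - 1/k) (OPT - |N(G_s)|)` turns this into
`|N(G_k)| ≥ (1 - (1 - x) e^{x-1}) OPT ≥ (1 - 1/e + x² / (4e)) OPT` with `x = t / k ≥ ε / (16 d)`.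
A union bound over `T` and over `n - m` left nodes hitting `T`, each with probability at most
`1/2`, bounds the probability of a bad graph by `e^{-n/5}`; as `d ≤ |N(O_k)| ≤ n`, bad graphs eat
less than half of the `x² / (4e)` gain. For `d ≤ 1` greedy is simply optimal.
-/

section Numeric

lemma one_sub_mul_exp_le {x : ℝ} (h0 : 0 ≤ x) (h1 : x ≤ 1) :
    (1 - x) * Real.exp x ≤ 1 - x ^ 2 / 4 := by
  have hb := Real.exp_bound (x := x) (by rwa [abs_of_nonneg h0]) (n := 2) (by norm_num)
  norm_num [Finset.sum_range_succ, Nat.factorial, abs_of_nonneg h0] at hb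
  nlinarith [(abs_le.mp hb).2, sq_nonneg x, Real.exp_pos x]

lemma one_sub_one_div_pow_le_exp {k t : ℕ} (hk : 0 < k) (htk : t ≤ k) :
    (1 - 1 / (k : ℝ)) ^ (k - t) ≤ Real.exp (t / k - 1) := by
  calc (1 - 1 / (k : ℝ)) ^ (k - t) ≤ Real.exp (-(1 / k)) ^ (k - t) :=
        pow_le_pow_left₀ (Nat.one_sub_one_div_cast_nonneg k)
          (by linarith [Real.add_one_le_exp (-(1 / (k : ℝ)))]) _
    _ = Real.exp (t / k - 1) := by
        rw [← Real.exp_nat_mul, Nat.cast_sub htk]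
        field_simp
        ring_nf

lemma choose_mul_pow_le_add_pow {x : ℝ} (hx : 0 ≤ x) (n t : ℕ) :
    (n.choose t : ℝ) * x ^ t ≤ (x + 1) ^ n := by
  rcases lt_or_ge n t with hnt | htn
  · simp [Nat.choose_eq_zero_of_lt hnt, pow_nonneg (by linarith : (0 : ℝ) ≤ x + 1)]
  rw [add_pow]
  refine le_of_eq_of_le (by ring) (single_le_sum (f := fun i => x ^ i * 1 ^ (n - i) *
    (n.choose i : ℝ)) (fun i _ => by positivity) (mem_range.mpr (Nat.lt_succ_of_le htn)))

lemma choose_le_exp (n t : ℕ) : (n.choose t : ℝ) ≤ Real.exp (n / 15 + 3 * t) := by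
  have h15 : (15 : ℝ) ≤ Real.exp 3 := by
    rw [show (3 : ℝ) = (3 : ℕ) * 1 by norm_num, Real.exp_nat_mul]
    calc (15 : ℝ) ≤ 2.7 ^ 3 := by norm_num
      _ ≤ Real.exp 1 ^ 3 := by gcongr; linarith [Real.exp_one_gt_d9]
  calc (n.choose t : ℝ) = n.choose t * (1 / 15) ^ t * 15 ^ t := by
        rw [mul_assoc, ← mul_pow]; norm_num
    _ ≤ (1 / 15 + 1) ^ n * Real.exp 3 ^ t := by
        gcongr
        exact choose_mul_pow_le_add_pow (by norm_num) n t
    _ ≤ Real.exp (1 / 15) ^ n * Real.exp 3 ^ t := by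
        gcongr
        linarith [Real.add_one_le_exp (1 / 15 : ℝ)]
    _ = Real.exp (n / 15 + 3 * t) := by
        rw [← Real.exp_nat_mul, ← Real.exp_nat_mul, ← Real.exp_add]
        ring_nf

lemma exp_le_two_pow (s : ℕ) : Real.exp (2 / 3 * s) ≤ 2 ^ s := by
  have h : Real.exp (2 / 3) ≤ 2 := by
    calc Real.exp (2 / 3) ≤ Real.exp (Real.log 2) :=
          Real.exp_le_exp.mpr (by linarith [Real.log_two_gt_d9])
      _ = 2 := Real.exp_log two_pos
  calc Real.exp (2 / 3 * s) = Real.exp (2 / 3) ^ s := by rw [← Real.exp_nat_mul]; ring_nf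
    _ ≤ 2 ^ s := by gcongr

open Filter Topology in
lemma eventually_natCast_mul_exp_neg_le {c : ℝ} (hc : 0 < c) :
    ∀ᶠ n : ℕ in atTop, (n : ℝ) * Real.exp (-(n / 5)) ≤ c := by
  have h : Tendsto (fun x : ℝ => x * Real.exp (-(x / 5))) atTop (𝓝 0) := by
    have := ((Real.tendsto_pow_mul_exp_neg_atTop_nhds_zero 1).comp
      (tendsto_id.atTop_div_const (by norm_num : (0 : ℝ) < 5))).const_mul 5
    refine (this.congr fun x => ?_).trans (by simp)
    simp only [Function.comp_apply, id, pow_one]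
    ring
  exact (h.comp tendsto_natCast_atTop_atTop).eventually (eventually_le_nhds hc)

lemma one_sub_one_div_exp_add_pow_le_one {ε : ℝ} (hε0 : 0 ≤ ε) (hε1 : ε ≤ 1) :
    1 - 1 / Real.exp 1 + (ε / 20) ^ 24 ≤ 1 := by
  have h3 : 1 / 3 ≤ 1 / Real.exp 1 :=
    one_div_le_one_div_of_le (Real.exp_pos 1) Real.exp_one_lt_three.le
  have hε : (ε / 20) ^ 24 ≤ (1 / 20) ^ 24 := by gcongr
  norm_num at hε
  linarith

lemma two_mul_pow_le_sq_div {ε x : ℝ} (hε0 : 0 ≤ ε) (hε1 : ε ≤ 1) (hx : ε ^ 9 / (16 * 20 ^ 4) ≤ x) :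
    2 * (ε / 20) ^ 24 ≤ x ^ 2 / (4 * Real.exp 1) := by
  have he : 4 * Real.exp 1 ≤ 12 := by linarith [Real.exp_one_lt_three]
  have h6 : ε ^ 6 ≤ 1 := pow_le_one₀ hε0 hε1
  calc 2 * (ε / 20) ^ 24 = ε ^ 18 * ε ^ 6 * (2 / 20 ^ 24) := by ring
    _ ≤ ε ^ 18 * 1 * (1 / (12 * 256 * 20 ^ 8)) :=
        mul_le_mul (mul_le_mul_of_nonneg_left h6 (by positivity)) (by norm_num) (by norm_num)
          (by positivity)
    _ = (ε ^ 9 / (16 * 20 ^ 4)) ^ 2 / 12 := by ring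
    _ ≤ x ^ 2 / (4 * Real.exp 1) := by gcongr

end Numeric

section Coverage

variable {ι α : Type*} [DecidableEq α] (N : ι → Finset α)

lemma card_biUnion_le_card_biUnion_add_card_mul {O S : Finset ι} {g : ℕ}
    (hg : ∀ u ∈ O, u ∉ S → (N u \ S.biUnion N).card ≤ g) :
    (O.biUnion N).card ≤ (S.biUnion N).card + O.card * g := by
  calc (O.biUnion N).card ≤ (S.biUnion N ∪ O.biUnion fun u => N u \ S.biUnion N).card := by
        refine card_le_card fun j hj => ?_
        by_cases hjS : j ∈ S.biUnion N
        · exact mem_union_left _ hjS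
        · obtain ⟨u, hu, hju⟩ := mem_biUnion.mp hj
          exact mem_union_right _ (mem_biUnion.mpr ⟨u, hu, mem_sdiff.mpr ⟨hju, hjS⟩⟩)
    _ ≤ (S.biUnion N).card + ∑ u ∈ O, (N u \ S.biUnion N).card :=
        (card_union_le _ _).trans (Nat.add_le_add_left card_biUnion_le _)
    _ ≤ (S.biUnion N).card + O.card * g := by
        refine Nat.add_le_add_left ?_ _
        rw [← smul_eq_mul, ← sum_const]
        refine sum_le_sum fun u hu => ?_
        by_cases huS : u ∈ S
        · simp [sdiff_eq_empty_iff_subset.mpr (subset_biUnion_of_mem N huS)]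
        · exact hg u hu huS

lemma card_biUnion_le_mul {S : Finset ι} {d : ℕ} (hd : ∀ i ∈ S, (N i).card ≤ d) :
    (S.biUnion N).card ≤ S.card * d :=
  card_biUnion_le.trans (by simpa using sum_le_sum hd)

end Coverage

section Greedy

variable {n m : ℕ} (N : Fin n → Finset (Fin m))

lemma greedy_succ (t : ℕ) : greedy N (t + 1) = greedyStep N (greedy N t) := rfl

lemma greedyStep_spec {S : Finset (Fin n)} (h : (univ \ S).Nonempty) :
    ∃ v ∉ S, (∀ u ∉ S, (N u \ S.biUnion N).card ≤ (N v \ S.biUnion N).card) ∧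
      greedyStep N S = insert v S := by
  rw [greedyStep, dif_pos h]
  generalize_proofs hne
  obtain ⟨hv, hmax⟩ := mem_filter.mp (min'_mem _ hne)
  refine ⟨_, (mem_sdiff.mp hv).2, fun u hu => ?_, rfl⟩
  rw [hmax]
  exact le_sup (f := fun v => (N v \ S.biUnion N).card) (by simpa using hu)

lemma subset_greedyStep (S : Finset (Fin n)) : S ⊆ greedyStep N S := by
  unfold greedyStep
  split_ifs
  exacts [subset_insert _ _, Subset.rfl]

lemma card_biUnion_add_card_sdiff_le_greedyStep {S : Finset (Fin n)} {u : Fin n} (hu : u ∉ S) :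
    (S.biUnion N).card + (N u \ S.biUnion N).card ≤ ((greedyStep N S).biUnion N).card := by
  obtain ⟨v, hvS, hmax, hstep⟩ := greedyStep_spec N ⟨u, by simpa using hu⟩
  rw [hstep, biUnion_insert, ← card_sdiff_add_card]
  linarith [hmax u hu]

lemma greedy_mono : Monotone (greedy N) :=
  monotone_nat_of_le_succ fun _ => subset_greedyStep N _

lemma card_greedy_le (t : ℕ) : (greedy N t).card ≤ t := by
  induction t with
  | zero => simp [greedy]
  | succ t ih =>
    rw [greedy_succ, greedyStep]
    split_ifs
    exacts [(card_insert_le _ _).trans (by omega), by omega]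

lemma exists_card_le_card_biUnion_eq_optValue (k : ℕ) :
    ∃ O : Finset (Fin n), O.card ≤ k ∧ (O.biUnion N).card = optValue N k := by
  obtain ⟨O, hO, hval⟩ := exists_mem_eq_sup
    (univ.powerset.filter fun S : Finset (Fin n) => S.card ≤ k) ⟨∅, by simp⟩
    fun S => (S.biUnion N).card
  exact ⟨O, (mem_filter.mp hO).2, hval.symm⟩

lemma card_biUnion_le_optValue {S : Finset (Fin n)} {k : ℕ} (hS : S.card ≤ k) :
    (S.biUnion N).card ≤ optValue N k :=
  le_sup (f := fun S : Finset (Fin n) => (S.biUnion N).card)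
    (mem_filter.mpr ⟨mem_powerset.mpr (subset_univ _), hS⟩)

lemma optValue_le_mul {d : ℕ} (hd : ∀ i, (N i).card ≤ d) (k : ℕ) : optValue N k ≤ k * d :=
  Finset.sup_le fun _ hS => (card_biUnion_le_mul N fun i _ => hd i).trans
    (Nat.mul_le_mul_right d (mem_filter.mp hS).2)

lemma optValue_le_card (k : ℕ) : optValue N k ≤ m :=
  Finset.sup_le fun S _ => by simpa using card_le_card (subset_univ (S.biUnion N))

lemma card_biUnion_greedy_mono {s t : ℕ} (h : s ≤ t) :
    ((greedy N s).biUnion N).card ≤ ((greedy N t).biUnion N).card :=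
  card_le_card (biUnion_subset_biUnion_of_subset_left _ (greedy_mono N h))

lemma optValue_le_card_biUnion_greedy_add_mul (k t : ℕ) :
    optValue N k ≤ ((greedy N t).biUnion N).card +
      k * (((greedy N (t + 1)).biUnion N).card - ((greedy N t).biUnion N).card) := by
  obtain ⟨O, hOk, hO⟩ := exists_card_le_card_biUnion_eq_optValue N k
  rw [← hO]
  refine (card_biUnion_le_card_biUnion_add_card_mul N fun u _ hu => ?_).trans
    (Nat.add_le_add_left (Nat.mul_le_mul_right _ hOk) _)
  have := card_biUnion_add_card_sdiff_le_greedyStep N hu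
  rw [greedy_succ]
  omega

lemma optValue_sub_greedy_succ_le {k : ℕ} (hk : 0 < k) (t : ℕ) :
    (optValue N k : ℝ) - ((greedy N (t + 1)).biUnion N).card ≤
      (1 - 1 / k) * ((optValue N k : ℝ) - ((greedy N t).biUnion N).card) := by
  have hk' : (0 : ℝ) < k := by exact_mod_cast hk
  have hgap : (optValue N k : ℝ) ≤ ((greedy N t).biUnion N).card +
      k * ((((greedy N (t + 1)).biUnion N).card : ℝ) - ((greedy N t).biUnion N).card) := by
    have := optValue_le_card_biUnion_greedy_add_mul N k t
    rwa [← Nat.cast_le (α := ℝ), Nat.cast_add, Nat.cast_mul,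
      Nat.cast_sub (card_biUnion_greedy_mono N t.le_succ)] at this
  have : ((optValue N k : ℝ) - ((greedy N t).biUnion N).card) / k ≤
      (((greedy N (t + 1)).biUnion N).card : ℝ) - ((greedy N t).biUnion N).card := by
    rw [div_le_iff₀ hk']
    linarith
  rw [one_sub_mul, one_div_mul_eq_div]
  linarith

lemma optValue_sub_greedy_add_le {k : ℕ} (hk : 0 < k) (t j : ℕ) :
    (optValue N k : ℝ) - ((greedy N (t + j)).biUnion N).card ≤
      (1 - 1 / k) ^ j * ((optValue N k : ℝ) - ((greedy N t).biUnion N).card) := by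
  induction j with
  | zero => simp
  | succ j ih =>
    calc (optValue N k : ℝ) - ((greedy N (t + j + 1)).biUnion N).card
        ≤ (1 - 1 / k) * ((optValue N k : ℝ) - ((greedy N (t + j)).biUnion N).card) :=
          optValue_sub_greedy_succ_le N hk _
      _ ≤ (1 - 1 / k) * ((1 - 1 / k) ^ j *
          ((optValue N k : ℝ) - ((greedy N t).biUnion N).card)) :=
          mul_le_mul_of_nonneg_left ih (Nat.one_sub_one_div_cast_nonneg k)
      _ = _ := by ring

lemma min_le_card_biUnion_greedy (k t : ℕ) :
    min t (optValue N k) ≤ ((greedy N t).biUnion N).card := by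
  induction t with
  | zero => simp
  | succ t ih =>
    by_cases h : optValue N k ≤ ((greedy N t).biUnion N).card
    · exact (min_le_right _ _).trans (h.trans (card_biUnion_greedy_mono N t.le_succ))
    · obtain ⟨u, hu, hgain⟩ : ∃ u ∉ greedy N t, 1 ≤ (N u \ (greedy N t).biUnion N).card := by
        by_contra! hnone
        obtain ⟨O, -, hO⟩ := exists_card_le_card_biUnion_eq_optValue N k
        have := card_biUnion_le_card_biUnion_add_card_mul N (O := O) (g := 0)
          fun u _ hu => by simpa using hnone u hu
        omega
      have := card_biUnion_add_card_sdiff_le_greedyStep N hu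
      rw [greedy_succ]
      omega

lemma le_optValue {d k : ℕ} (hd : ∀ i, (N i).card = d)
    (hn : 0 < n) (hk : 0 < k) : d ≤ optValue N k := by
  simpa [hd] using card_biUnion_le_optValue N (S := {⟨0, hn⟩})
    (by rw [card_singleton]; exact hk)

lemma optValue_le_card_biUnion_greedy_of_le_one {k : ℕ} (hd : ∀ i, (N i).card ≤ 1) :
    optValue N k ≤ ((greedy N k).biUnion N).card := by
  have := min_le_card_biUnion_greedy N k k
  have := optValue_le_mul N hd k
  omega

lemma optValue_sub_greedy_le {d k t : ℕ} (hd : ∀ i, (N i).card ≤ d) (hk : 0 < k) (htk : t ≤ k)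
    (ht : t * d ≤ ((greedy N t).biUnion N).card) :
    (optValue N k : ℝ) - ((greedy N k).biUnion N).card ≤
      Real.exp (t / k - 1) * ((1 - t / k) * optValue N k) := by
  have hk' : (0 : ℝ) < k := by exact_mod_cast hk
  have hx1 : (t : ℝ) / k ≤ 1 := by
    rw [div_le_one hk']
    exact_mod_cast htk
  have hopt : (optValue N k : ℝ) ≤ k * d := by exact_mod_cast optValue_le_mul N hd k
  have ht' : (t : ℝ) * d ≤ ((greedy N t).biUnion N).card := by exact_mod_cast ht
  have hgap : (optValue N k : ℝ) - ((greedy N t).biUnion N).card ≤ (1 - t / k) * optValue N k := by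
    have : (t : ℝ) / k * optValue N k ≤ t * d := by
      calc (t : ℝ) / k * optValue N k ≤ t / k * (k * d) := by gcongr
        _ = t * d := by field_simp
    linarith
  have hiter := optValue_sub_greedy_add_le N hk t (k - t)
  rw [Nat.add_sub_cancel' htk] at hiter
  calc _ ≤ (1 - 1 / (k : ℝ)) ^ (k - t) * ((1 - t / k) * optValue N k) :=
        hiter.trans (by gcongr; exact pow_nonneg (Nat.one_sub_one_div_cast_nonneg k) _)
    _ ≤ _ := by
        gcongr
        exact one_sub_one_div_pow_le_exp hk htk

end Greedy

section Fresh

variable {n r : ℕ}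

def ManyAvoid (J m : ℕ) (N : Fin n → Finset (Fin r)) : Prop :=
  ∀ T : Finset (Fin r), T.card = J → m < (univ.filter fun u => Disjoint (N u) T).card

lemma mul_le_card_biUnion_greedy_of_manyAvoid {N : Fin n → Finset (Fin r)} {d J m : ℕ}
    (hd : ∀ i, (N i).card = d) (hE : ManyAvoid J m N) (hJ : J ≤ r) (hmJ : m * d ≤ J) :
    ∀ t ≤ m + 1, t * d ≤ ((greedy N t).biUnion N).card := by
  intro t
  induction t with
  | zero => simp
  | succ t ih =>
    intro ht
    have hcov : ((greedy N t).biUnion N).card ≤ J :=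
      (card_biUnion_le_mul N fun i _ => (hd i).le).trans
        ((Nat.mul_le_mul_right d ((card_greedy_le N t).trans (by omega))).trans hmJ)
    obtain ⟨T, hsub, hT⟩ := exists_superset_card_eq hcov (by simpa using hJ)
    obtain ⟨u, hu, huG⟩ : ∃ u, Disjoint (N u) T ∧ u ∉ greedy N t := by
      by_contra! hall
      have := card_le_card (s := univ.filter fun u => Disjoint (N u) T) (t := greedy N t)
        fun u hu => hall u (mem_filter.mp hu).2
      have := hE T hT
      have := card_greedy_le N t
      omega
    have hfresh : (N u \ (greedy N t).biUnion N).card = d := by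
      rw [sdiff_eq_self_of_disjoint (hu.mono_right hsub), hd]
    have := card_biUnion_add_card_sdiff_le_greedyStep N huG
    rw [greedy_succ, add_mul, one_mul]
    have := ih (by omega)
    omega

lemma le_card_biUnion_greedy_of_manyAvoid {d J m k : ℕ} {N : Fin n → Finset (Fin r)}
    (hd : ∀ i, (N i).card = d) (hE : ManyAvoid J m N) (hJ : J ≤ r) (hmJ : m * d ≤ J)
    (hk : 0 < k) :
    (1 - 1 / Real.exp 1 + ((min (m + 1) k : ℕ) / k : ℝ) ^ 2 / (4 * Real.exp 1)) * optValue N k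
      ≤ ((greedy N k).biUnion N).card := by
  set t := min (m + 1) k
  have hgap := optValue_sub_greedy_le N (fun i => (hd i).le) hk (min_le_right _ _)
    (mul_le_card_biUnion_greedy_of_manyAvoid hd hE hJ hmJ t (min_le_left _ _))
  set x : ℝ := t / k
  have hx0 : 0 ≤ x := by positivity
  have hx1 : x ≤ 1 := div_le_one_of_le₀ (by exact_mod_cast min_le_right _ _) (Nat.cast_nonneg _)
  have he := Real.exp_pos 1
  have hexp : Real.exp (x - 1) * (1 - x) ≤ (1 - x ^ 2 / 4) / Real.exp 1 := by
    rw [Real.exp_sub, div_mul_eq_mul_div, div_le_div_iff_of_pos_right he]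
    linarith [one_sub_mul_exp_le hx0 hx1]
  have hopt : (0 : ℝ) ≤ optValue N k := Nat.cast_nonneg _
  have := mul_le_mul_of_nonneg_right hexp hopt
  calc (1 - 1 / Real.exp 1 + x ^ 2 / (4 * Real.exp 1)) * optValue N k
      = optValue N k - (1 - x ^ 2 / 4) / Real.exp 1 * optValue N k := by field_simp; ring
    _ ≤ _ := by linarith

end Fresh

section Counting

lemma card_filter_le_card_filter_piFinset {ι α : Type*} [Fintype ι] [DecidableEq ι]
    [DecidableEq α] (A : Finset α) (p : α → Prop) [DecidablePred p] (r : ℕ) :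
    ((Fintype.piFinset fun _ : ι => A).filter
        fun f => r ≤ (univ.filter fun i => p (f i)).card).card ≤
      (Fintype.card ι).choose r * ((A.filter p).card ^ r * A.card ^ (Fintype.card ι - r)) := by
  calc _ ≤ ((powersetCard r univ).biUnion fun W : Finset ι =>
          Fintype.piFinset fun i => if i ∈ W then A.filter p else A).card := by
        refine card_le_card fun f hf => ?_
        obtain ⟨hfA, hr⟩ := mem_filter.mp hf
        obtain ⟨W, hW, hWr⟩ := exists_subset_card_eq hr
        refine mem_biUnion.mpr ⟨W, mem_powersetCard.mpr ⟨subset_univ _, hWr⟩, ?_⟩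
        rw [Fintype.mem_piFinset] at hfA ⊢
        intro i
        split_ifs with hi
        · exact mem_filter.mpr ⟨hfA i, (mem_filter.mp (hW hi)).2⟩
        · exact hfA i
    _ ≤ ∑ W ∈ powersetCard r univ,
          (Fintype.piFinset fun i => if i ∈ W then A.filter p else A).card := card_biUnion_le
    _ = _ := by
        rw [sum_congr rfl fun W hW => ?_, sum_const, card_powersetCard, card_univ, smul_eq_mul]
        simp_rw [Fintype.card_piFinset, apply_ite card]
        rw [prod_ite, prod_const, prod_const, filter_mem_eq_inter, univ_inter, filter_not,
          filter_mem_eq_inter, univ_inter, card_sdiff_of_subset (subset_univ _), card_univ,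
          (mem_powersetCard.mp hW).2]

variable {α : Type*} [Fintype α] [DecidableEq α]

lemma card_filter_mem_powersetCard_le (d : ℕ) (j : α) :
    ((powersetCard d univ).filter fun s => j ∈ s).card ≤ (Fintype.card α - 1).choose (d - 1) := by
  calc _ ≤ ((powersetCard (d - 1) (univ.erase j)).image (insert j)).card := by
        refine card_le_card fun s hs => ?_
        obtain ⟨hsd, hj⟩ := mem_filter.mp hs
        refine mem_image.mpr ⟨s.erase j, mem_powersetCard.mpr ⟨erase_subset_erase j
          (subset_univ s), ?_⟩, insert_erase hj⟩
        rw [card_erase_of_mem hj, (mem_powersetCard.mp hsd).2]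
    _ ≤ (powersetCard (d - 1) (univ.erase j)).card := card_image_le
    _ = _ := by rw [card_powersetCard, card_erase_of_mem (mem_univ j), card_univ]

lemma card_filter_not_disjoint_powersetCard_le (d : ℕ) (T : Finset α) :
    ((powersetCard d univ).filter fun s => ¬Disjoint s T).card ≤
      T.card * (Fintype.card α - 1).choose (d - 1) := by
  calc _ ≤ (T.biUnion fun j => (powersetCard d univ).filter fun s => j ∈ s).card := by
        refine card_le_card fun s hs => ?_
        obtain ⟨hsd, hsT⟩ := mem_filter.mp hs
        obtain ⟨j, hjs, hjT⟩ := not_disjoint_iff.mp hsT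
        exact mem_biUnion.mpr ⟨j, hjT, mem_filter.mpr ⟨hsd, hjs⟩⟩
    _ ≤ ∑ j ∈ T, ((powersetCard d univ).filter fun s => j ∈ s).card := card_biUnion_le
    _ ≤ _ := by
        rw [← smul_eq_mul, ← sum_const]
        exact sum_le_sum fun j _ => card_filter_mem_powersetCard_le d j

lemma two_mul_card_filter_not_disjoint_powersetCard_le {d : ℕ} (hd : 0 < d) {T : Finset α}
    (hT : 2 * T.card * d ≤ Fintype.card α) :
    2 * ((powersetCard d univ).filter fun s => ¬Disjoint s T).card ≤
      (Fintype.card α).choose d := by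
  have h := card_filter_not_disjoint_powersetCard_le d T
  obtain ⟨d, rfl⟩ : ∃ d', d = d' + 1 := ⟨d - 1, by omega⟩
  rcases hα : Fintype.card α with _ | n
  · rw [hα] at hT
    have : T.card = 0 := by nlinarith
    simp_all
  rw [hα, Nat.add_sub_cancel, Nat.add_sub_cancel] at h
  rw [hα] at hT
  refine Nat.le_of_mul_le_mul_right ?_ d.succ_pos
  calc _ ≤ 2 * (T.card * n.choose d) * (d + 1) := by gcongr
    _ = 2 * T.card * (d + 1) * n.choose d := by ring
    _ ≤ (n + 1) * n.choose d := by gcongr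
    _ = _ := Nat.add_one_mul_choose_eq n d

lemma lrrGraphs_eq_piFinset (n d : ℕ) :
    lrrGraphs n d = Fintype.piFinset fun _ => powersetCard d univ := by
  ext N
  simp [lrrGraphs, mem_powersetCard]

lemma card_lrrGraphs (n d : ℕ) : (lrrGraphs n d).card = n.choose d ^ n := by
  simp [lrrGraphs_eq_piFinset, Fintype.card_piFinset]

open scoped Classical in
lemma two_pow_mul_card_filter_not_manyAvoid_le {n d J m : ℕ} (hd : 0 < d) (hJd : 2 * J * d ≤ n)
    (hm : m ≤ n) :
    2 ^ (n - m) * ((lrrGraphs n d).filter fun N => ¬ManyAvoid J m N).card ≤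
      n.choose J * (n.choose m * n.choose d ^ n) := by
  set hitting := fun T : Finset (Fin n) => (Fintype.piFinset fun _ : Fin n =>
    powersetCard d (univ : Finset (Fin n))).filter
      fun N => n - m ≤ (univ.filter fun u => ¬Disjoint (N u) T).card
  have hbad : ((lrrGraphs n d).filter fun N => ¬ManyAvoid J m N) ⊆
      (powersetCard J univ).biUnion hitting := by
    intro N hN
    obtain ⟨hNΩ, hNE⟩ := mem_filter.mp hN
    obtain ⟨T, hT, hfew⟩ : ∃ T : Finset (Fin n), T.card = J ∧
        (univ.filter fun u => Disjoint (N u) T).card ≤ m := by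
      simpa [ManyAvoid] using hNE
    have hsplit := card_filter_add_card_filter_not (s := (univ : Finset (Fin n)))
      (fun u => Disjoint (N u) T)
    rw [card_univ, Fintype.card_fin] at hsplit
    refine mem_biUnion.mpr ⟨T, mem_powersetCard.mpr ⟨subset_univ _, hT⟩, mem_filter.mpr
      ⟨lrrGraphs_eq_piFinset n d ▸ hNΩ, by omega⟩⟩
  have hhit : ∀ T : Finset (Fin n), T.card = J →
      2 ^ (n - m) * (hitting T).card ≤ n.choose m * n.choose d ^ n := by
    intro T hT
    have htail := card_filter_le_card_filter_piFinset (ι := Fin n)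
      (powersetCard d (univ : Finset (Fin n))) (fun s => ¬Disjoint s T) (n - m)
    have hhalf := two_mul_card_filter_not_disjoint_powersetCard_le hd
      (T := T) (by simpa [hT] using hJd)
    simp only [Fintype.card_fin, card_powersetCard, card_univ, Nat.sub_sub_self hm,
      Nat.choose_symm hm] at htail hhalf
    calc 2 ^ (n - m) * (hitting T).card
        ≤ 2 ^ (n - m) * (n.choose m *
          (((powersetCard d univ).filter fun s => ¬Disjoint s T).card ^ (n - m) *
            n.choose d ^ m)) := Nat.mul_le_mul_left _ htail
      _ = n.choose m * ((2 * ((powersetCard d univ).filter fun s => ¬Disjoint s T).card)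
            ^ (n - m) * n.choose d ^ m) := by ring
      _ ≤ n.choose m * (n.choose d ^ (n - m) * n.choose d ^ m) := by gcongr
      _ = n.choose m * n.choose d ^ n := by rw [← pow_add, Nat.sub_add_cancel hm]
  calc _ ≤ 2 ^ (n - m) * ∑ T ∈ powersetCard J univ, (hitting T).card :=
        Nat.mul_le_mul_left _ ((card_le_card hbad).trans card_biUnion_le)
    _ ≤ ∑ _T ∈ powersetCard J (univ : Finset (Fin n)), n.choose m * n.choose d ^ n := by
        rw [mul_sum]
        exact sum_le_sum fun T hT => hhit T (mem_powersetCard.mp hT).2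
    _ = _ := by rw [sum_const, card_powersetCard, card_univ, Fintype.card_fin, smul_eq_mul]

end Counting

open scoped Classical in
lemma card_filter_not_manyAvoid_le {n d m : ℕ} (hd : 2 ≤ d) (hm : m * (8 * d ^ 2) ≤ n) :
    (((lrrGraphs n d).filter fun N => ¬ManyAvoid (m * d) m N).card : ℝ) ≤
      Real.exp (-(n / 5)) * (lrrGraphs n d).card := by
  have hJn : 16 * (m * d) ≤ n := by nlinarith
  have hmn : 32 * m ≤ n := by nlinarith
  have hcount := two_pow_mul_card_filter_not_manyAvoid_le (n := n) (d := d) (J := m * d)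
    (m := m) (by omega) (by nlinarith) (by omega)
  rw [← card_lrrGraphs] at hcount
  have hchoose : (n.choose (m * d) : ℝ) * n.choose m ≤ Real.exp (-(n / 5)) * 2 ^ (n - m) := by
    have hJn' : (16 : ℝ) * (m * d) ≤ n := by exact_mod_cast hJn
    have hmn' : (32 : ℝ) * m ≤ n := by exact_mod_cast hmn
    calc (n.choose (m * d) : ℝ) * n.choose m
        ≤ Real.exp (n / 15 + 3 * (m * d : ℕ)) * Real.exp (n / 15 + 3 * m) := by
          gcongr <;> exact choose_le_exp _ _
      _ ≤ Real.exp (-(n / 5)) * Real.exp (2 / 3 * (n - m : ℕ)) := by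
          rw [← Real.exp_add, ← Real.exp_add, Nat.cast_sub (by omega)]
          refine Real.exp_le_exp.mpr ?_
          push_cast
          linarith
      _ ≤ Real.exp (-(n / 5)) * 2 ^ (n - m) := by gcongr; exact exp_le_two_pow _
  have hpos : (0 : ℝ) < 2 ^ (n - m) := by positivity
  refine le_of_mul_le_mul_left ?_ hpos
  calc (2 : ℝ) ^ (n - m) * ((lrrGraphs n d).filter fun N => ¬ManyAvoid (m * d) m N).card
      ≤ n.choose (m * d) * n.choose m * (lrrGraphs n d).card := by
        rw [mul_assoc]; exact_mod_cast hcount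
    _ ≤ Real.exp (-(n / 5)) * 2 ^ (n - m) * (lrrGraphs n d).card := by gcongr
    _ = _ := by ring

lemma mul_sum_le_sum_of_good_of_rare_bad {ι : Type*} (s : Finset ι) (p : ι → Prop) [DecidablePred p]
    {f g : ι → ℝ} {a c M m : ℝ} (ha : a ≤ 1) (hc : 0 ≤ c) (hf : ∀ i ∈ s, 0 ≤ f i)
    (hg : ∀ i ∈ s, 0 ≤ g i) (hfM : ∀ i ∈ s, f i ≤ M) (hfm : ∀ i ∈ s, p i → m ≤ f i)
    (hgood : ∀ i ∈ s, p i → (a + c) * f i ≤ g i)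
    (hbad : M * (s.filter fun i => ¬p i).card ≤ c * (m * (s.filter p).card)) :
    a * ∑ i ∈ s, f i ≤ ∑ i ∈ s, g i := by
  rw [← sum_filter_add_sum_filter_not s p f, ← sum_filter_add_sum_filter_not s p g]
  have hbad_f : a * ∑ i ∈ s.filter fun i => ¬p i, f i ≤ c * ∑ i ∈ s.filter p, f i :=
    calc a * ∑ i ∈ s.filter fun i => ¬p i, f i ≤ ∑ i ∈ s.filter fun i => ¬p i, f i :=
          mul_le_of_le_one_left (sum_nonneg fun i hi => hf i (mem_filter.mp hi).1) ha
      _ ≤ M * (s.filter fun i => ¬p i).card := by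
          rw [mul_comm, ← nsmul_eq_mul]
          exact sum_le_card_nsmul _ _ _ fun i hi => hfM i (mem_filter.mp hi).1
      _ ≤ c * (m * (s.filter p).card) := hbad
      _ ≤ c * ∑ i ∈ s.filter p, f i := by
          rw [mul_comm m, ← nsmul_eq_mul]
          gcongr
          exact card_nsmul_le_sum _ _ _ fun i hi => hfm i (mem_filter.mp hi).1 (mem_filter.mp hi).2
  have hgood_g : (a + c) * ∑ i ∈ s.filter p, f i ≤ ∑ i ∈ s.filter p, g i := by
    rw [mul_sum]
    exact sum_le_sum fun i hi => hgood i (mem_filter.mp hi).1 (mem_filter.mp hi).2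
  have hbad_g : 0 ≤ ∑ i ∈ s.filter fun i => ¬p i, g i :=
    sum_nonneg fun i hi => hg i (mem_filter.mp hi).1
  linarith

lemma mul_lrrExp_le_lrrExp {n d : ℕ} {a : ℝ} {f g : (Fin n → Finset (Fin n)) → ℝ}
    (h : a * ∑ N ∈ lrrGraphs n d, f N ≤ ∑ N ∈ lrrGraphs n d, g N) :
    a * lrrExp n d f ≤ lrrExp n d g := by
  rw [lrrExp, lrrExp, ← mul_div_assoc]
  exact div_le_div_of_nonneg_right h (Nat.cast_nonneg _)

lemma pow_nine_div_le_min_div {ε : ℝ} {n d k : ℕ} (hε0 : 0 < ε) (hε1 : ε < 1) (hd : 0 < d)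
    (hdε : (d : ℝ) ≤ 20 ^ 4 / ε ^ 8) (hk : 0 < k) (hkε : (k : ℝ) ≤ 2 * n / (ε * d)) :
    ε ^ 9 / (16 * 20 ^ 4) ≤ ((min (n / (8 * d ^ 2) + 1) k : ℕ) / k : ℝ) := by
  have hd' : (0 : ℝ) < d := by exact_mod_cast hd
  have hk' : (0 : ℝ) < k := by exact_mod_cast hk
  rcases le_total (n / (8 * d ^ 2) + 1) k with hmk | hkm
  · have hn : (n : ℝ) < (n / (8 * d ^ 2) + 1 : ℕ) * (8 * d ^ 2) := by
      exact_mod_cast (Nat.lt_div_mul_add (by positivity : 0 < 8 * d ^ 2)).trans_eq (by ring)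
    have hkε' : k * (ε * d) ≤ 2 * n := (le_div_iff₀ (by positivity)).mp hkε
    have hdε' : d * ε ^ 8 ≤ 20 ^ 4 := (le_div_iff₀ (by positivity)).mp hdε
    rw [min_eq_left hmk]
    calc ε ^ 9 / (16 * 20 ^ 4) ≤ ε / (16 * d) := by
          rw [div_le_div_iff₀ (by positivity) (by positivity)]
          nlinarith
      _ ≤ _ := by
          rw [div_le_div_iff₀ (by positivity) hk']
          refine le_of_mul_le_mul_left ?_ hd'
          nlinarith
  · rw [min_eq_right hkm, div_self hk'.ne']
    calc ε ^ 9 / (16 * 20 ^ 4) ≤ 1 ^ 9 / (16 * 20 ^ 4) := by gcongr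
      _ ≤ 1 := by norm_num

open scoped Classical in
lemma natCast_mul_card_filter_not_manyAvoid_le {n d m : ℕ} {c : ℝ} (hd : 2 ≤ d)
    (hm : m * (8 * d ^ 2) ≤ n) (hn : 0 < n) (hc : c ≤ 1 / 2)
    (hnexp : n * Real.exp (-(n / 5)) ≤ c) :
    (n : ℝ) * ((lrrGraphs n d).filter fun N => ¬ManyAvoid (m * d) m N).card ≤
      c * (2 * ((lrrGraphs n d).filter (ManyAvoid (m * d) m)).card) := by
  have hbad := card_filter_not_manyAvoid_le hd hm
  have hsplit := card_filter_add_card_filter_not (s := lrrGraphs n d) (ManyAvoid (m * d) m)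
  rw [← Nat.cast_inj (R := ℝ), Nat.cast_add] at hsplit
  rw [← hsplit] at hbad
  set G : ℝ := (((lrrGraphs n d).filter (ManyAvoid (m * d) m)).card : ℝ)
  set B : ℝ := (((lrrGraphs n d).filter fun N => ¬ManyAvoid (m * d) m N).card : ℝ)
  have hn1 : (1 : ℝ) ≤ n := by exact_mod_cast hn
  have hB : 0 ≤ B := by positivity
  have hnB : n * B ≤ c * (G + B) :=
    calc (n : ℝ) * B ≤ n * (Real.exp (-(n / 5)) * (G + B)) := by gcongr
      _ = n * Real.exp (-(n / 5)) * (G + B) := by ring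
      _ ≤ c * (G + B) := by gcongr
  have hBG : B ≤ G := by nlinarith
  have : c * B ≤ c * G := by nlinarith
  linarith

open scoped Classical in
lemma mul_sum_optValue_le_sum_greedy {ε : ℝ} {n d k : ℕ} (hε0 : 0 < ε) (hε1 : ε < 1)
    (hd : 2 ≤ d) (hdε : (d : ℝ) ≤ 20 ^ 4 / ε ^ 8) (hk : 0 < k) (hkε : (k : ℝ) ≤ 2 * n / (ε * d))
    (hn : 0 < n) (hnexp : n * Real.exp (-(n / 5)) ≤ (ε / 20) ^ 24) :
    (1 - 1 / Real.exp 1 + (ε / 20) ^ 24) * ∑ N ∈ lrrGraphs n d, (optValue N k : ℝ) ≤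
      ∑ N ∈ lrrGraphs n d, (((greedy N k).biUnion N).card : ℝ) := by
  have hx := two_mul_pow_le_sq_div hε0.le hε1.le
    (pow_nine_div_le_min_div hε0 hε1 (by omega) hdε hk hkε)
  set c := (ε / 20) ^ 24
  set m := n / (8 * d ^ 2)
  have hm : m * (8 * d ^ 2) ≤ n := Nat.div_mul_le_self n _
  have hc : c ≤ 1 / 2 :=
    calc c ≤ (1 / 20) ^ 24 := pow_le_pow_left₀ (by positivity) (by linarith) _
      _ ≤ 1 / 2 := by norm_num
  have hΩ : ∀ N ∈ lrrGraphs n d, ∀ i, (N i).card = d := fun N hN => (mem_filter.mp hN).2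
  refine mul_sum_le_sum_of_good_of_rare_bad _ (ManyAvoid (m * d) m) (c := c) (M := n) (m := 2)
    (one_sub_one_div_exp_add_pow_le_one hε0.le hε1.le) (by positivity) (fun _ _ => by positivity)
    (fun _ _ => by positivity) (fun N _ => by exact_mod_cast optValue_le_card N k)
    (fun N hN _ => by exact_mod_cast (le_optValue N (hΩ N hN) hn hk).trans' hd)
    (fun N hN hE => ?_) (natCast_mul_card_filter_not_manyAvoid_le hd hm hn hc hnexp)
  refine le_trans ?_ (le_card_biUnion_greedy_of_manyAvoid (hΩ N hN) hE (by nlinarith) le_rfl hk)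
  exact mul_le_mul_of_nonneg_right (by linarith) (Nat.cast_nonneg _)

/-- **Lemma 3.6 (critical region, small degrees).** There is a threshold
function `n₀` such that for every `ε ∈ (0,1)`, every `n ≥ n₀(ε)`, every
`d ≤ 20⁴/ε⁸` and every `k ∈ [εn/(2d), 2n/(εd)]`, greedy achieves, in
expectation, a `(1 - 1/e + (ε/20)²⁴)`-approximation under `LRR(n, d)`. -/
theorem greedy_critical_region_small_degrees :
    ∃ n₀ : ℝ → ℕ,
      ∀ ε : ℝ, 0 < ε → ε < 1 →
        ∀ n d k : ℕ, n₀ ε ≤ n → (d : ℝ) ≤ 20 ^ 4 / ε ^ 8 →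
          ε * n / (2 * d) ≤ (k : ℝ) → (k : ℝ) ≤ 2 * n / (ε * d) →
          lrrExp n d (fun N => (((greedy N k).biUnion N).card : ℝ)) ≥
            (1 - 1 / Real.exp 1 + (ε / 20) ^ 24) *
              lrrExp n d (fun N => (optValue N k : ℝ)) := by
  have hlarge : ∀ ε : ℝ, ∃ n₀ : ℕ, ∀ n ≥ n₀, 0 < ε →
      0 < n ∧ n * Real.exp (-(n / 5)) ≤ (ε / 20) ^ 24 := by
    intro ε
    by_cases hε : 0 < ε
    · obtain ⟨n₀, hn₀⟩ := Filter.eventually_atTop.mp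
        ((eventually_natCast_mul_exp_neg_le (c := (ε / 20) ^ 24) (by positivity)).and
          (Filter.eventually_gt_atTop 0))
      exact ⟨n₀, fun n hn _ => (hn₀ n hn).symm⟩
    · exact ⟨0, fun _ _ h => absurd h hε⟩
  choose n₀ hn₀ using hlarge
  refine ⟨n₀, fun ε hε0 hε1 n d k hn hdε hεk hkε => mul_lrrExp_le_lrrExp ?_⟩
  obtain ⟨hn0, hnexp⟩ := hn₀ ε n hn hε0
  rcases lt_or_ge d 2 with hd | hd
  · refine (mul_le_of_le_one_left (sum_nonneg fun _ _ => by positivity)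
      (one_sub_one_div_exp_add_pow_le_one hε0.le hε1.le)).trans (sum_le_sum fun N hN => ?_)
    exact_mod_cast optValue_le_card_biUnion_greedy_of_le_one N
      fun i => ((mem_filter.mp hN).2 i).trans_le (by omega)
  · have hk : 0 < k := by
      have : 0 < ε * n / (2 * d) := by positivity
      exact_mod_cast this.trans_le hεk
    exact mul_sum_optValue_le_sum_greedy hε0 hε1 hd hdε hk hkε hn0 hnexp
end

section
/- Let B = (L, R, E) be any (deterministic) bipartite graph and let t ≤ k be natural numbers. Then |N(G_k)| ≥ (1 − exp(−(1 − t/k)) · (1 − |N(G_t)| / |N(O_k)|)) · |N(O_k)|, where G_t and G_k are the greedy solutions after t and k iterations and O_k is an optimal solution of size at most k. -/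
open Finset

private lemma cov_le_optValue {n m : ℕ} (N : Fin n → Finset (Fin m)) {k : ℕ}
    {S : Finset (Fin n)} (h : S.card ≤ k) :
    (S.biUnion N).card ≤ optValue N k := by
  unfold optValue
  exact Finset.le_sup (f := fun S : Finset (Fin n) => (S.biUnion N).card)
    (Finset.mem_filter.mpr ⟨Finset.mem_powerset.mpr (Finset.subset_univ S), h⟩)

private lemma exists_optSet {n m : ℕ} (N : Fin n → Finset (Fin m)) (k : ℕ) :
    ∃ O : Finset (Fin n), O.card ≤ k ∧ (O.biUnion N).card = optValue N k := by
  classical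
  obtain ⟨O, hO, hval⟩ := Finset.exists_mem_eq_sup
    (Finset.univ.powerset.filter fun S : Finset (Fin n) => S.card ≤ k)
    ⟨∅, Finset.mem_filter.mpr ⟨Finset.mem_powerset.mpr (Finset.empty_subset _), by simp⟩⟩
    (fun S : Finset (Fin n) => (S.biUnion N).card)
  exact ⟨O, (Finset.mem_filter.mp hO).2, hval.symm⟩

private lemma cov_insert {n m : ℕ} (N : Fin n → Finset (Fin m)) (S : Finset (Fin n))
    (u : Fin n) :
    ((insert u S).biUnion N).card = (S.biUnion N).card + ((N u) \ S.biUnion N).card := by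
  rw [Finset.biUnion_insert, ← Finset.card_sdiff_add_card, Nat.add_comm]

private lemma step_eq {n m : ℕ} (N : Fin n → Finset (Fin m)) (S : Finset (Fin n))
    (h : (Finset.univ \ S).Nonempty) :
    ((greedyStep N S).biUnion N).card =
      (S.biUnion N).card +
        (Finset.univ \ S).sup (fun v => ((N v) \ S.biUnion N).card) := by
  classical
  unfold greedyStep
  rw [dif_pos h, cov_insert]
  congr 1
  generalize_proofs pf
  exact (Finset.mem_filter.mp (Finset.min'_mem _ pf)).2

private lemma opt_le {n m : ℕ} (N : Fin n → Finset (Fin m)) (S : Finset (Fin n)) (k : ℕ) :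
    optValue N k ≤ (S.biUnion N).card +
      k * (Finset.univ \ S).sup (fun v => ((N v) \ S.biUnion N).card) := by
  classical
  obtain ⟨O, hOk, hOval⟩ := exists_optSet N k
  set T := S.biUnion N with hT
  set M := (Finset.univ \ S).sup (fun v => ((N v) \ T).card) with hM
  have h1 : optValue N k ≤ ((O.biUnion N) \ T).card + T.card := by
    rw [← hOval]
    exact Finset.card_le_card_sdiff_add_card
  have h2 : (O.biUnion N) \ T = O.biUnion (fun v => N v \ T) := by
    ext x
    simp only [Finset.mem_sdiff, Finset.mem_biUnion]
    tauto
  have h3 : ((O.biUnion N) \ T).card ≤ ∑ v ∈ O, ((N v) \ T).card := by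
    rw [h2]; exact Finset.card_biUnion_le
  have h4 : ∀ v ∈ O, ((N v) \ T).card ≤ M := by
    intro v _
    by_cases hv : v ∈ S
    · have : N v \ T = ∅ := by
        rw [Finset.sdiff_eq_empty_iff_subset]
        exact Finset.subset_biUnion_of_mem N hv
      simp [this]
    · rw [hM]
      exact Finset.le_sup (f := fun v => ((N v) \ T).card)
        (Finset.mem_sdiff.mpr ⟨Finset.mem_univ v, hv⟩)
  have h5 : ∑ v ∈ O, ((N v) \ T).card ≤ O.card * M := by
    have := Finset.sum_le_card_nsmul O _ M h4
    simpa [smul_eq_mul] using this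
  have h6 : O.card * M ≤ k * M := Nat.mul_le_mul_right M hOk
  omega

private lemma greedy_card_le {n m : ℕ} (N : Fin n → Finset (Fin m)) :
    ∀ s, (greedy N s).card ≤ s
  | 0 => by simp [greedy]
  | s + 1 => by
    show (greedyStep N (greedy N s)).card ≤ s + 1
    unfold greedyStep
    split
    · exact le_trans (Finset.card_insert_le _ _) (Nat.succ_le_succ (greedy_card_le N s))
    · exact le_trans (greedy_card_le N s) (Nat.le_succ s)

private lemma key_step {n m : ℕ} (N : Fin n → Finset (Fin m)) (k : ℕ) (hk : 1 ≤ k)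
    (s : ℕ) :
    (optValue N k : ℝ) - (((greedy N (s + 1)).biUnion N).card : ℝ) ≤
      (1 - 1 / (k : ℝ)) * ((optValue N k : ℝ) - (((greedy N s).biUnion N).card : ℝ)) := by
  classical
  have hk' : (0 : ℝ) < k := by exact_mod_cast hk
  set S := greedy N s with hS
  have hstep : greedy N (s + 1) = greedyStep N S := rfl
  by_cases h : (Finset.univ \ S).Nonempty
  · have h1 := step_eq N S h
    have h2 := opt_le N S k
    set M := (Finset.univ \ S).sup (fun v => ((N v) \ S.biUnion N).card) with hMdef
    have h1' : (((greedy N (s + 1)).biUnion N).card : ℝ) =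
        ((S.biUnion N).card : ℝ) + M := by rw [hstep, h1]; push_cast; ring
    have h2' : (optValue N k : ℝ) ≤ ((S.biUnion N).card : ℝ) + k * M := by
      exact_mod_cast h2
    have key : ((optValue N k : ℝ) - ((S.biUnion N).card : ℝ)) / k ≤ M := by
      rw [div_le_iff₀ hk']
      nlinarith
    have expand : (1 - 1 / (k : ℝ)) * ((optValue N k : ℝ) - ((S.biUnion N).card : ℝ)) =
        ((optValue N k : ℝ) - ((S.biUnion N).card : ℝ)) -
          ((optValue N k : ℝ) - ((S.biUnion N).card : ℝ)) / k := by ring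
    rw [h1', expand]
    linarith
  · have hSe : greedyStep N S = S := by unfold greedyStep; rw [dif_neg h]
    have hScov : optValue N k ≤ (S.biUnion N).card := by
      obtain ⟨O, hOk, hOval⟩ := exists_optSet N k
      have hSuniv : S = Finset.univ := by
        have := Finset.not_nonempty_iff_eq_empty.mp h
        have hsub : Finset.univ ⊆ S := by
          intro x hx
          by_contra hxS
          exact Finset.notMem_empty x (this ▸ Finset.mem_sdiff.mpr ⟨hx, hxS⟩)
        exact Finset.Subset.antisymm (Finset.subset_univ S) hsub
      rw [← hOval, hSuniv]
      exact Finset.card_le_card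
        (Finset.biUnion_subset_biUnion_of_subset_left N (Finset.subset_univ O))
    have hf : (optValue N k : ℝ) - ((S.biUnion N).card : ℝ) ≤ 0 := by
      have : (optValue N k : ℝ) ≤ ((S.biUnion N).card : ℝ) := by exact_mod_cast hScov
      linarith
    have hinv : (0 : ℝ) ≤ 1 / (k : ℝ) := by positivity
    have hcov : (((greedy N (s + 1)).biUnion N).card : ℝ) = ((S.biUnion N).card : ℝ) := by
      rw [hstep, hSe]
    rw [hcov]
    nlinarith

private lemma iterate_bound {n m : ℕ} (N : Fin n → Finset (Fin m)) (k : ℕ) (hk : 1 ≤ k)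
    (t : ℕ) : ∀ j : ℕ,
    (optValue N k : ℝ) - (((greedy N (t + j)).biUnion N).card : ℝ) ≤
      (1 - 1 / (k : ℝ)) ^ j *
        ((optValue N k : ℝ) - (((greedy N t).biUnion N).card : ℝ)) := by
  intro j
  induction j with
  | zero => simp
  | succ j ih =>
    have hbase : (0 : ℝ) ≤ 1 - 1 / (k : ℝ) := by
      have hk' : (1 : ℝ) ≤ k := by exact_mod_cast hk
      have : 1 / (k : ℝ) ≤ 1 := by
        rw [div_le_one (by linarith)]; exact hk'
      linarith
    have hstep := key_step N k hk (t + j)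
    calc (optValue N k : ℝ) - (((greedy N (t + (j + 1))).biUnion N).card : ℝ)
        = (optValue N k : ℝ) - (((greedy N ((t + j) + 1)).biUnion N).card : ℝ) := by
          rw [Nat.add_assoc]
      _ ≤ (1 - 1 / (k : ℝ)) *
            ((optValue N k : ℝ) - (((greedy N (t + j)).biUnion N).card : ℝ)) := hstep
      _ ≤ (1 - 1 / (k : ℝ)) * ((1 - 1 / (k : ℝ)) ^ j *
            ((optValue N k : ℝ) - (((greedy N t).biUnion N).card : ℝ))) :=
          mul_le_mul_of_nonneg_left ih hbase
      _ = (1 - 1 / (k : ℝ)) ^ (j + 1) *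
            ((optValue N k : ℝ) - (((greedy N t).biUnion N).card : ℝ)) := by ring

/-- **Lemma C.4 (worst-case analysis from iteration `t`).** For any bipartite
graph and naturals `t ≤ k`,
`|N(G_k)| ≥ (1 - e^{-(1 - t/k)}·(1 - |N(G_t)|/|N(O_k)|))·|N(O_k)|`. -/
theorem worst_case_from_iteration (n m : ℕ) (N : Fin n → Finset (Fin m))
    (t k : ℕ) (htk : t ≤ k) :
    (((greedy N k).biUnion N).card : ℝ) ≥
      (1 - Real.exp (-(1 - (t : ℝ) / k)) *
          (1 - (((greedy N t).biUnion N).card : ℝ) / (optValue N k : ℝ))) *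
        (optValue N k : ℝ) := by
  classical
  by_cases hopt : optValue N k = 0
  · rw [hopt]
    push_cast
    rw [mul_zero]
    positivity
  · have hoptpos : 0 < optValue N k := Nat.pos_of_ne_zero hopt
    have hO : (0 : ℝ) < (optValue N k : ℝ) := by exact_mod_cast hoptpos
    have hk : 1 ≤ k := by
      by_contra hk0
      push_neg at hk0
      interval_cases k
      · have : optValue N 0 = 0 := by
          obtain ⟨O, hOk, hOval⟩ := exists_optSet N 0
          have : O = ∅ := Finset.card_eq_zero.mp (Nat.le_zero.mp hOk)
          simp [this] at hOval
          omega
        omega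
    have hk' : (0 : ℝ) < (k : ℝ) := by exact_mod_cast hk
    have hct : ((greedy N t).biUnion N).card ≤ optValue N k :=
      cov_le_optValue N (le_trans (greedy_card_le N t) htk)
    have hct' : (((greedy N t).biUnion N).card : ℝ) ≤ (optValue N k : ℝ) := by
      exact_mod_cast hct
    have hmain := iterate_bound N k hk t (k - t)
    rw [Nat.add_sub_cancel' htk] at hmain
    have hbase : (0 : ℝ) ≤ 1 - 1 / (k : ℝ) := by
      have hk1 : (1 : ℝ) ≤ k := by exact_mod_cast hk
      have : 1 / (k : ℝ) ≤ 1 := by rw [div_le_one hk']; exact hk1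
      linarith
    have hexp1 : (1 - 1 / (k : ℝ)) ≤ Real.exp (-(1 / (k : ℝ))) := by
      have := Real.add_one_le_exp (-(1 / (k : ℝ)))
      linarith
    have hpow : (1 - 1 / (k : ℝ)) ^ (k - t) ≤ Real.exp (-(1 / (k : ℝ))) ^ (k - t) :=
      pow_le_pow_left₀ hbase hexp1 (k - t)
    have hexp2 : Real.exp (-(1 / (k : ℝ))) ^ (k - t) = Real.exp (-(1 - (t : ℝ) / k)) := by
      rw [← Real.exp_nat_mul]
      congr 1
      have hkt : ((k - t : ℕ) : ℝ) = (k : ℝ) - (t : ℝ) := by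
        exact Nat.cast_sub htk
      rw [hkt]
      field_simp
    have hchain : (optValue N k : ℝ) - (((greedy N k).biUnion N).card : ℝ) ≤
        Real.exp (-(1 - (t : ℝ) / k)) *
          ((optValue N k : ℝ) - (((greedy N t).biUnion N).card : ℝ)) := by
      calc (optValue N k : ℝ) - (((greedy N k).biUnion N).card : ℝ)
          ≤ (1 - 1 / (k : ℝ)) ^ (k - t) *
            ((optValue N k : ℝ) - (((greedy N t).biUnion N).card : ℝ)) := hmain
        _ ≤ Real.exp (-(1 / (k : ℝ))) ^ (k - t) *
            ((optValue N k : ℝ) - (((greedy N t).biUnion N).card : ℝ)) :=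
            mul_le_mul_of_nonneg_right hpow (by linarith)
        _ = Real.exp (-(1 - (t : ℝ) / k)) *
            ((optValue N k : ℝ) - (((greedy N t).biUnion N).card : ℝ)) := by
            rw [hexp2]
    have hrw : (1 - Real.exp (-(1 - (t : ℝ) / k)) *
          (1 - (((greedy N t).biUnion N).card : ℝ) / (optValue N k : ℝ))) *
        (optValue N k : ℝ) =
        (optValue N k : ℝ) - Real.exp (-(1 - (t : ℝ) / k)) *
          ((optValue N k : ℝ) - (((greedy N t).biUnion N).card : ℝ)) := by
      field_simp
      try ring
    rw [ge_iff_le, hrw]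
    linarith
end

section
/- Let n ≥ 2 and let G^r = (V, E^r) be drawn from the with-replacement random graph model G^r_{n,n}: V has n vertices and E^r = {e_1, …, e_n}, where e_1, …, e_n are independent uniform samples from the set of all 2-element subsets of V (duplicates merged). Then Pr[n − |E^r| ≥ log n] ≤ 1/log n. -/
open Finset

/-- Sample space of the with-replacement random graph model `G^r_{n,m}`: the
`m` independent uniform edge samples `e_1, …, e_m`, each a 2-element subset of
the `n` vertices. The edge set of the resulting graph is
`E^r = {e_1, …, e_m}` (duplicates merged), i.e. `Finset.univ.image f`. -/
def edgeSamples (n m : ℕ) : Finset (Fin m → Finset (Fin n)) :=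
  Finset.univ.filter fun f => ∀ i, (f i).card = 2

open scoped Classical in
/-- Probability of an event under the with-replacement model `G^r_{n,m}`. -/
noncomputable def edgeProb (n m : ℕ) (p : (Fin m → Finset (Fin n)) → Prop) : ℝ :=
  ((edgeSamples n m).filter p).card / (edgeSamples n m).card

namespace FewDup

/-- The set of 2-element subsets of `Fin n`. -/
def T (n : ℕ) : Finset (Finset (Fin n)) := Finset.univ.filter fun s => s.card = 2

lemma mem_edgeSamples {n m : ℕ} {f : Fin m → Finset (Fin n)} :
    f ∈ edgeSamples n m ↔ ∀ i, (f i).card = 2 := by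
  simp [edgeSamples]

lemma edgeSamples_eq (n m : ℕ) :
    edgeSamples n m = Fintype.piFinset fun _ : Fin m => T n := by
  ext f; simp [edgeSamples, T, Fintype.mem_piFinset]

lemma card_T (n : ℕ) : (T n).card = n.choose 2 := by
  have h : T n = Finset.powersetCard 2 (univ : Finset (Fin n)) := by
    ext s; simp [T, Finset.mem_powersetCard]
  rw [h, Finset.card_powersetCard, card_univ, Fintype.card_fin]

lemma card_edgeSamples (n m : ℕ) : (edgeSamples n m).card = (n.choose 2) ^ m := by
  rw [edgeSamples_eq, Fintype.card_piFinset]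
  simp [card_T]

lemma card_filter_pair {n m : ℕ} (i j : Fin m) (hij : j ≠ i) :
    ((edgeSamples n m).filter fun f => f j = f i).card = (n.choose 2) ^ (m - 1) := by
  classical
  have hcard : (Fintype.piFinset fun _ : {k : Fin m // k ≠ i} => T n).card
      = (n.choose 2) ^ (m - 1) := by
    rw [Fintype.card_piFinset]
    simp only [card_T, Finset.prod_const, Finset.card_univ]
    congr 1
    simp [Fintype.card_subtype_compl]
  rw [← hcard]
  refine Finset.card_bij' (fun f _ => fun k : {k : Fin m // k ≠ i} => f k.1)
    (fun g _ => fun k => if h : k = i then g ⟨j, hij⟩ else g ⟨k, h⟩) ?_ ?_ ?_ ?_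
  · intro f hf
    rw [Fintype.mem_piFinset]
    intro k
    have := (mem_edgeSamples.1 (Finset.mem_filter.1 hf).1) k.1
    simp [T, this]
  · intro g hg
    rw [Fintype.mem_piFinset] at hg
    refine Finset.mem_filter.2 ⟨mem_edgeSamples.2 fun k => ?_, ?_⟩
    · by_cases h : k = i
      · have := hg ⟨j, hij⟩
        simpa [T, dif_pos h] using this
      · have := hg ⟨k, h⟩
        simpa [T, dif_neg h] using this
    · simp [dif_neg hij]
  · intro f hf
    funext k
    by_cases h : k = i
    · have h2 := (Finset.mem_filter.1 hf).2
      simp [dif_pos h, h2, h]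
    · simp [dif_neg h]
  · intro g hg
    funext k
    simp [dif_neg k.2]

/-- Duplicate indices: `i` such that some earlier sample equals `f i`. -/
def dup {n m : ℕ} (f : Fin m → Finset (Fin n)) : Finset (Fin m) :=
  Finset.univ.filter fun i => ∃ j, j < i ∧ f j = f i

lemma card_image_add_dup {n m : ℕ} (f : Fin m → Finset (Fin n)) :
    m ≤ (Finset.univ.image f).card + (dup f).card := by
  classical
  have hfc := Finset.card_filter_add_card_filter_not
    (s := (univ : Finset (Fin m))) (p := fun i => ∃ j, j < i ∧ f j = f i)
  rw [Finset.card_univ, Fintype.card_fin] at hfc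
  -- f is injective on the complement of dup
  set C : Finset (Fin m) := Finset.univ.filter fun i => ¬ ∃ j, j < i ∧ f j = f i with hC
  have hinj : Set.InjOn f C := by
    intro a ha b hb hab
    by_contra hne
    rcases lt_or_gt_of_ne hne with h | h
    · exact (Finset.mem_filter.1 hb).2 ⟨a, h, hab⟩
    · exact (Finset.mem_filter.1 ha).2 ⟨b, h, hab.symm⟩
  have h1 : C.card = (C.image f).card := (Finset.card_image_of_injOn hinj).symm
  have h2 : (C.image f).card ≤ (Finset.univ.image f).card :=
    Finset.card_le_card (Finset.image_subset_image (Finset.subset_univ C))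
  have hdup : (dup f).card = (Finset.univ.filter fun i => ∃ j, j < i ∧ f j = f i).card := rfl
  omega

lemma card_dup_le {n m : ℕ} (f : Fin m → Finset (Fin n)) :
    (dup f).card ≤ ∑ i : Fin m, ((Finset.Iio i).filter fun j => f j = f i).card := by
  classical
  rw [dup, Finset.card_filter]
  refine Finset.sum_le_sum fun i _ => ?_
  by_cases h : ∃ j, j < i ∧ f j = f i
  · rcases h with ⟨j, hj, hfj⟩
    rw [if_pos ⟨j, hj, hfj⟩]
    exact Finset.card_pos.2 ⟨j, Finset.mem_filter.2 ⟨Finset.mem_Iio.2 hj, hfj⟩⟩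
  · rw [if_neg h]
    exact Nat.zero_le _

lemma sum_dup_le (n : ℕ) (hn : 1 ≤ n) :
    ∑ f ∈ edgeSamples n n, (dup f).card ≤ (edgeSamples n n).card := by
  classical
  calc ∑ f ∈ edgeSamples n n, (dup f).card
      ≤ ∑ f ∈ edgeSamples n n, ∑ i : Fin n,
          ((Finset.Iio i).filter fun j => f j = f i).card :=
        Finset.sum_le_sum fun f _ => card_dup_le f
    _ = ∑ i : Fin n, ∑ f ∈ edgeSamples n n,
          ((Finset.Iio i).filter fun j => f j = f i).card := Finset.sum_comm
    _ = ∑ i : Fin n, ∑ f ∈ edgeSamples n n, ∑ j ∈ Finset.Iio i,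
          (if f j = f i then 1 else 0) := by
        simp_rw [Finset.card_filter]
    _ = ∑ i : Fin n, ∑ j ∈ Finset.Iio i, ∑ f ∈ edgeSamples n n,
          (if f j = f i then 1 else 0) := by
        refine Finset.sum_congr rfl fun i _ => Finset.sum_comm
    _ = ∑ i : Fin n, ∑ j ∈ Finset.Iio i, (n.choose 2) ^ (n - 1) := by
        refine Finset.sum_congr rfl fun i _ => Finset.sum_congr rfl fun j hj => ?_
        rw [← Finset.card_filter]
        exact card_filter_pair i j (ne_of_lt (Finset.mem_Iio.1 hj))
    _ = (∑ i : Fin n, (Finset.Iio i).card) * (n.choose 2) ^ (n - 1) := by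
        simp [Finset.sum_mul]
    _ = (n.choose 2) * (n.choose 2) ^ (n - 1) := by
        congr 1
        have h1 : ∀ i : Fin n, (Finset.Iio i).card = (i : ℕ) := fun i => by simp
        simp_rw [h1]
        have := Finset.sum_range_id_mul_two n
        rw [Fin.sum_univ_eq_sum_range (fun i => i) n, Nat.choose_two_right]
        omega
    _ = (n.choose 2) ^ n := by
        rw [← pow_succ']
        congr 1
        omega
    _ = (edgeSamples n n).card := (card_edgeSamples n n).symm

end FewDup

/-- **Lemma D.2.** For `G^r = (V, E^r)` drawn from the with-replacement model
`G^r_{n,n}`, `Pr[n - |E^r| ≥ log n] ≤ 1/log n`. -/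
theorem few_duplicated_edges (n : ℕ) (hn : 2 ≤ n) :
    edgeProb n n (fun f =>
      (n : ℝ) - ((Finset.univ.image f).card : ℝ) ≥ Real.log n) ≤
      1 / Real.log n := by
  classical
  have hlog : 0 < Real.log n := Real.log_pos (by exact_mod_cast hn)
  have hK : 0 < n.choose 2 := Nat.choose_pos hn
  have hN : 0 < (edgeSamples n n).card := by
    rw [FewDup.card_edgeSamples]; positivity
  rw [edgeProb]
  set A := (edgeSamples n n).filter (fun f =>
      (n : ℝ) - ((Finset.univ.image f).card : ℝ) ≥ Real.log n) with hA
  have key : (A.card : ℝ) * Real.log n ≤ ((edgeSamples n n).card : ℝ) := by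
    calc (A.card : ℝ) * Real.log n = ∑ _f ∈ A, Real.log n := by
          rw [Finset.sum_const, nsmul_eq_mul]
      _ ≤ ∑ f ∈ A, ((FewDup.dup f).card : ℝ) := by
          refine Finset.sum_le_sum fun f hf => ?_
          have hp := (Finset.mem_filter.1 hf).2
          have himg := FewDup.card_image_add_dup f
          have : (n : ℝ) ≤ ((Finset.univ.image f).card : ℝ) + ((FewDup.dup f).card : ℝ) := by
            exact_mod_cast himg
          linarith
      _ ≤ ∑ f ∈ edgeSamples n n, ((FewDup.dup f).card : ℝ) := by
          refine Finset.sum_le_sum_of_subset_of_nonneg (Finset.filter_subset _ _) ?_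
          intros; positivity
      _ ≤ ((edgeSamples n n).card : ℝ) := by
          rw [← Nat.cast_sum]
          exact_mod_cast FewDup.sum_dup_le n (by omega)
  rw [div_le_div_iff₀ (by exact_mod_cast hN) hlog]
  linarith
end

section
/- Let μ^r(n, n) denote the maximum matching size of a graph drawn from the with-replacement model G^r_{n,n}, and let μ(n, n) denote the maximum matching size of a graph drawn from the Erdős–Rényi model G_{n,n} (a uniformly random graph on n vertices with exactly n distinct edges). Then for every x, Pr[μ^r(n, n) ≥ x] ≥ Pr[μ(n, n) ≥ x + log n] · (1 − 1/log n). -/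
open Finset

/-- Sample space of the Erdős–Rényi model `G_{n,m}`: edge sets consisting of
exactly `m` distinct 2-element subsets of the `n` vertices. -/
def erGraphs (n m : ℕ) : Finset (Finset (Finset (Fin n))) :=
  ((Finset.univ.filter fun e : Finset (Fin n) => e.card = 2).powerset.filter
    fun E => E.card = m)

open scoped Classical in
/-- Probability of an event under the uniform distribution on a finite sample
space `Ω`. -/
noncomputable def uprob {α : Type*} [DecidableEq α] (Ω : Finset α) (p : α → Prop) : ℝ :=
  (Ω.filter p).card / Ω.card

open scoped Classical in
/-- The maximum size of a matching in the graph on vertex set `V` whose edges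
are the (two-element) sets in `E`: the largest cardinality of a set of
pairwise-disjoint edges. -/
noncomputable def matchingNumber {V : Type*} [DecidableEq V] (E : Finset (Finset V)) : ℕ :=
  (E.powerset.filter fun M : Finset (Finset V) =>
    (↑M : Set (Finset V)).PairwiseDisjoint id).sup Finset.card

/-! Sample the `n` edges with replacement and let `d` be the number of distinct edges drawn.
Conditioned on `d`, the set of drawn edges is a uniformly random `d`-subset of all edges, and a
uniformly random `d`-subset of a uniformly random `n`-subset is again uniform; deleting the
`n - d` other edges lowers the matching number by at most `n - d`. Hence whenever
`n - d ≤ log n`, the conditional probability of `μ ≥ x` is at least `Pr[μ(n,n) ≥ x + log n]`.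
Finally `n - d` is at most the number of colliding pairs of samples, whose expectation is
`C(n,2) · (1 / C(n,2)) = 1`, so by Markov `Pr[n - d > log n] ≤ 1 / log n`. -/

open Fintype (piFinset mem_piFinset card_piFinset)

lemma matchingNumber_le_add_card_sdiff {V : Type*} [DecidableEq V] (S E : Finset (Finset V)) :
    matchingNumber S ≤ matchingNumber E + #(S \ E) := by
  classical
  unfold matchingNumber
  refine Finset.sup_le fun M hM => ?_
  obtain ⟨hMS, hM⟩ := mem_filter.1 hM
  calc #M = #(M ∩ E) + #(M \ E) := (card_inter_add_card_sdiff M E).symm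
    _ ≤ matchingNumber E + #(S \ E) := by
        gcongr
        · refine le_sup (f := card) (mem_filter.2 ⟨mem_powerset.2 inter_subset_right, ?_⟩)
          exact hM.subset (coe_subset.2 inter_subset_left)
        · exact mem_powerset.1 hMS

lemma card_mul_choose_le_card_mul_choose {β : Type*} [DecidableEq β] {U : Finset β}
    {𝒜 𝒢 : Finset (Finset β)} {k d : ℕ} (h𝒜 : 𝒜 ⊆ U.powersetCard k)
    (h𝒢 : 𝒢 ⊆ U.powersetCard d) (hdk : d ≤ k) (hdown : ∀ S ∈ 𝒜, ∀ E ⊆ S, #E = d → E ∈ 𝒢) :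
    #𝒜 * k.choose d ≤ #𝒢 * (#U - d).choose (k - d) := by
  refine card_mul_le_card_mul (fun S E => E ⊆ S) (fun S hS => ?_) (fun E hE => ?_)
  · obtain ⟨-, hSk⟩ := mem_powersetCard.1 (h𝒜 hS)
    rw [← hSk, ← card_powersetCard]
    refine card_le_card fun E hE => ?_
    obtain ⟨hES, hEd⟩ := mem_powersetCard.1 hE
    exact (mem_bipartiteAbove _).2 ⟨hdown S hS E hES hEd, hES⟩
  · obtain ⟨hEU, rfl⟩ := mem_powersetCard.1 (h𝒢 hE)
    rw [← card_filter_powersetCard_subset E U k hEU hdk]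
    exact card_le_card (filter_subset_filter _ h𝒜)

section Sampling

variable {α β : Type*} [Fintype α] [DecidableEq α] [Fintype β] [DecidableEq β]

lemma card_filter_image_eq_of_card_eq {E E' : Finset β} (h : #E = #E') :
    #{f : α → β | univ.image f = E} = #{f : α → β | univ.image f = E'} := by
  obtain ⟨σ, rfl⟩ := Equiv.Perm.exists_map_finset_eq E E' h
  refine card_equiv ((Equiv.refl α).arrowCongr σ) fun f => ?_
  rw [show (Equiv.refl α).arrowCongr σ f = σ ∘ f from rfl]
  simp only [mem_filter, mem_univ, true_and, map_eq_image, ← image_image, Equiv.coe_toEmbedding,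
    (image_injective σ.injective).eq_iff]

lemma card_filter_image_mem_eq_sum {U : Finset β} {𝒢 : Finset (Finset β)}
    (h𝒢 : ∀ E ∈ 𝒢, E ⊆ U) :
    #{f ∈ piFinset fun _ : α => U | univ.image f ∈ 𝒢} =
      ∑ E ∈ 𝒢, #{f : α → β | univ.image f = E} := by
  rw [← sum_card_fiberwise_eq_card_filter]
  refine sum_congr rfl fun E hE => congrArg card ?_
  ext f
  simp only [mem_filter, mem_univ, true_and, mem_piFinset]
  refine ⟨And.right, ?_⟩
  rintro rfl
  exact ⟨fun a => h𝒢 _ hE (mem_image_of_mem f (mem_univ a)), rfl⟩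

lemma card_filter_image_mem_mul_choose {U : Finset β} {𝒢 : Finset (Finset β)} {d : ℕ}
    (h𝒢 : 𝒢 ⊆ U.powersetCard d) :
    #{f ∈ piFinset fun _ : α => U | univ.image f ∈ 𝒢} * (#U).choose d =
      #𝒢 * #{f ∈ piFinset fun _ : α => U | #(univ.image f) = d} := by
  have hd : {f ∈ piFinset fun _ : α => U | #(univ.image f) = d} =
      {f ∈ piFinset fun _ : α => U | univ.image f ∈ U.powersetCard d} := by
    refine filter_congr fun f hf => ?_
    simp only [mem_powersetCard, image_subset_iff, mem_univ,
      (mem_piFinset.1 hf), implies_true, true_and]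
  have hsub : ∀ E ∈ U.powersetCard d, E ⊆ U := fun E hE => (mem_powersetCard.1 hE).1
  rw [hd, card_filter_image_mem_eq_sum fun E hE => hsub E (h𝒢 hE),
    card_filter_image_mem_eq_sum hsub]
  obtain h | ⟨E₀, hE₀⟩ := (U.powersetCard d).eq_empty_or_nonempty
  · simp [subset_empty.1 (h ▸ h𝒢), h]
  have hfiber : ∀ E ∈ U.powersetCard d,
      #{f : α → β | univ.image f = E} = #{f : α → β | univ.image f = E₀} := fun E hE =>
    card_filter_image_eq_of_card_eq
      ((mem_powersetCard.1 hE).2.trans (mem_powersetCard.1 hE₀).2.symm)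
  rw [sum_const_nat fun E hE => hfiber E (h𝒢 hE), sum_const_nat hfiber, card_powersetCard]
  ring

lemma card_filter_card_image_mul_le {U : Finset β} {𝒜 𝒢 : Finset (Finset β)} {k d : ℕ}
    (h𝒜 : 𝒜 ⊆ U.powersetCard k) (h𝒢 : 𝒢 ⊆ U.powersetCard d) (hdk : d ≤ k)
    (hdown : ∀ S ∈ 𝒜, ∀ E ⊆ S, #E = d → E ∈ 𝒢) :
    #{f ∈ piFinset fun _ : α => U | #(univ.image f) = d} * #𝒜 ≤
      #{f ∈ piFinset fun _ : α => U | univ.image f ∈ 𝒢} * (#U).choose k := by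
  rcases lt_or_ge #U k with hUk | hkU
  · simp [subset_empty.1 (powersetCard_eq_empty.2 hUk ▸ h𝒜)]
  set T := #{f ∈ piFinset fun _ : α => U | #(univ.image f) = d}
  set X := #{f ∈ piFinset fun _ : α => U | univ.image f ∈ 𝒢}
  have hshadow := card_mul_choose_le_card_mul_choose h𝒜 h𝒢 hdk hdown
  have huniform : X * (#U).choose d = #𝒢 * T := card_filter_image_mem_mul_choose h𝒢
  refine Nat.le_of_mul_le_mul_right ?_
    (Nat.mul_pos (Nat.choose_pos hdk) (Nat.choose_pos (hdk.trans hkU)))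
  calc T * #𝒜 * (k.choose d * (#U).choose d)
      = #𝒜 * k.choose d * (T * (#U).choose d) := by ring
    _ ≤ #𝒢 * (#U - d).choose (k - d) * (T * (#U).choose d) := by gcongr
    _ = #𝒢 * T * (#U - d).choose (k - d) * (#U).choose d := by ring
    _ = X * ((#U).choose d * (#U - d).choose (k - d)) * (#U).choose d := by
        rw [← huniform]; ring
    _ = X * (#U).choose k * (k.choose d * (#U).choose d) := by
        rw [← Nat.choose_mul hdk]; ring

end Sampling

lemma sub_card_image_le_card_filter_exists_lt {β : Type*} [DecidableEq β] {m : ℕ}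
    (f : Fin m → β) : m - #(univ.image f) ≤ #{i | ∃ j < i, f j = f i} := by
  have hfirst : #{i | ¬∃ j < i, f j = f i} ≤ #(univ.image f) := by
    refine card_le_card_of_injOn f (fun i _ => mem_image_of_mem f (mem_univ i)) ?_
    intro i hi i' hi' h
    simp only [coe_filter, mem_univ, true_and, Set.mem_ofPred_eq, not_exists, not_and] at hi hi'
    rcases lt_trichotomy i i' with hlt | rfl | hgt
    · exact absurd h (hi' i hlt)
    · rfl
    · exact absurd h.symm (hi i' hgt)
  have := card_filter_add_card_filter_not (s := univ) fun i : Fin m => ∃ j < i, f j = f i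
  rw [card_univ, Fintype.card_fin] at this
  omega

lemma card_filter_apply_eq_apply_le {ι β : Type*} [Fintype ι] [DecidableEq ι] [DecidableEq β]
    (U : Finset β) {i j : ι} (hij : j ≠ i) :
    #{f ∈ piFinset fun _ : ι => U | f j = f i} ≤ #U ^ (Fintype.card ι - 1) := by
  calc #{f ∈ piFinset fun _ : ι => U | f j = f i}
      ≤ #(piFinset fun _ : {k // k ≠ i} => U) := by
        refine card_le_card_of_injOn (fun f k => f k) (fun f hf => ?_) fun f hf g hg hfg => ?_
        · simp only [mem_coe, mem_filter, mem_piFinset] at hf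
          simpa only [mem_coe, mem_piFinset] using fun k : {k // k ≠ i} => hf.1 k
        · simp only [coe_filter, Set.mem_ofPred_eq] at hf hg
          funext k
          by_cases hk : k = i
          · subst hk
            rw [← hf.2, ← hg.2]
            exact congrFun hfg ⟨j, hij⟩
          · exact congrFun hfg ⟨k, hk⟩
    _ = #U ^ (Fintype.card ι - 1) := by
        simp [card_piFinset, Fintype.card_subtype_compl]

lemma sum_sub_card_image_le {β : Type*} [DecidableEq β] (U : Finset β) (m : ℕ) :
    ∑ f ∈ piFinset (fun _ : Fin m => U), (m - #(univ.image f)) ≤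
      m.choose 2 * #U ^ (m - 1) := by
  set Ω := piFinset fun _ : Fin m => U
  have hrepeat : ∀ i : Fin m,
      #{f ∈ Ω | ∃ j < i, f j = f i} ≤ ∑ j ∈ Iio i, #{f ∈ Ω | f j = f i} := by
    intro i
    refine (card_le_card fun f hf => ?_).trans card_biUnion_le
    obtain ⟨hf, j, hj, hfj⟩ := mem_filter.1 hf
    exact mem_biUnion.2 ⟨j, mem_Iio.2 hj, mem_filter.2 ⟨hf, hfj⟩⟩
  calc ∑ f ∈ Ω, (m - #(univ.image f))
      ≤ ∑ f ∈ Ω, #{i | ∃ j < i, f j = f i} :=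
        sum_le_sum fun f _ => sub_card_image_le_card_filter_exists_lt f
    _ = ∑ i, #{f ∈ Ω | ∃ j < i, f j = f i} := by
        simp only [card_eq_sum_ones, sum_filter]
        exact sum_comm
    _ ≤ ∑ i : Fin m, ∑ j ∈ Iio i, #U ^ (m - 1) := by
        refine sum_le_sum fun i _ => (hrepeat i).trans (sum_le_sum fun j hj => ?_)
        simpa using card_filter_apply_eq_apply_le U (mem_Iio.1 hj).ne
    _ = m.choose 2 * #U ^ (m - 1) := by
        simp only [sum_const, Fin.card_Iio, smul_eq_mul, ← sum_mul,
          Fin.sum_univ_eq_sum_range (fun i => i) m, sum_range_id, Nat.choose_two_right]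

lemma card_mul_one_sub_inv_le_card_filter {ι : Type*} {s : Finset ι} {g : ι → ℝ} {L : ℝ}
    (hL : 0 < L) (hg : ∀ i ∈ s, 0 ≤ g i) (hsum : ∑ i ∈ s, g i ≤ #s) :
    #s * (1 - 1 / L) ≤ #{i ∈ s | g i ≤ L} := by
  have hfar : #{i ∈ s | ¬g i ≤ L} * L ≤ #s :=
    calc #{i ∈ s | ¬g i ≤ L} * L ≤ ∑ i ∈ s with ¬g i ≤ L, g i := by
          rw [← nsmul_eq_mul]
          exact card_nsmul_le_sum _ _ _ fun i hi => (not_le.1 (mem_filter.1 hi).2).le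
      _ ≤ ∑ i ∈ s, g i :=
          sum_le_sum_of_subset_of_nonneg (filter_subset _ _) fun i hi _ => hg i hi
      _ ≤ #s := hsum
  have hsplit := card_filter_add_card_filter_not (s := s) fun i => g i ≤ L
  rw [← Nat.cast_inj (R := ℝ), Nat.cast_add] at hsplit
  have hfar' := (le_div_iff₀ hL).2 hfar
  rw [mul_one_sub, mul_one_div]
  linarith

lemma card_mul_one_sub_inv_log_le_card_filter {β : Type*} [DecidableEq β] (U : Finset β) (m : ℕ)
    (hU : m.choose 2 ≤ #U) :
    #(piFinset fun _ : Fin m => U) * (1 - 1 / Real.log m) ≤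
      #{f ∈ piFinset fun _ : Fin m => U | (m : ℝ) - #(univ.image f) ≤ Real.log m} := by
  have hcard : ∀ f : Fin m → β, #(univ.image f) ≤ m := fun f => card_image_le.trans (by simp)
  rcases le_or_gt m 1 with hm | hm
  · -- here `log m = 0`, so the factor is `1 - 1 / 0 = 1`, and no sample repeats an edge
    interval_cases m <;> simp
  refine card_mul_one_sub_inv_le_card_filter (Real.log_pos (by exact_mod_cast hm))
    (fun f _ => sub_nonneg.2 (by exact_mod_cast hcard f)) ?_
  calc ∑ f ∈ piFinset (fun _ : Fin m => U), ((m : ℝ) - #(univ.image f))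
      = ((∑ f ∈ piFinset (fun _ : Fin m => U), (m - #(univ.image f)) : ℕ) : ℝ) := by
        push_cast [Nat.cast_sub (hcard _)]
        rfl
    _ ≤ ((m.choose 2 * #U ^ (m - 1) : ℕ) : ℝ) := by exact_mod_cast sum_sub_card_image_le U m
    _ ≤ ((#U * #U ^ (m - 1) : ℕ) : ℝ) := by gcongr
    _ = #(piFinset fun _ : Fin m => U) := by
        rw [← pow_succ', Nat.sub_add_cancel hm.le, card_piFinset, prod_const, card_univ,
          Fintype.card_fin]

lemma card_filter_sub_le_mul_card_le {V : Type*} [Fintype V] [DecidableEq V]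
    (U : Finset (Finset V)) (k : ℕ) (x L : ℝ) :
    #{f ∈ piFinset fun _ : Fin k => U | (k : ℝ) - #(univ.image f) ≤ L} *
        #{S ∈ U.powersetCard k | x + L ≤ matchingNumber S} ≤
      #{f ∈ piFinset fun _ : Fin k => U | x ≤ matchingNumber (univ.image f)} *
        (#U).choose k := by
  set Ω := piFinset fun _ : Fin k => U
  set 𝒜 := {S ∈ U.powersetCard k | x + L ≤ matchingNumber S}
  set D := (range (k + 1)).filter fun d : ℕ => (k : ℝ) - d ≤ L
  have hD : {f ∈ Ω | #(univ.image f) ∈ D} = {f ∈ Ω | (k : ℝ) - #(univ.image f) ≤ L} :=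
    filter_congr fun f _ => by
      simp [D, card_image_le.trans (card_univ.trans (Fintype.card_fin k)).le]
  have hfiber : ∀ d ∈ D, #{f ∈ Ω | #(univ.image f) = d} * #𝒜 ≤
      #{f ∈ {f ∈ Ω | x ≤ matchingNumber (univ.image f)} | #(univ.image f) = d} * (#U).choose k := by
    intro d hd
    obtain ⟨hdk, hL⟩ : d ≤ k ∧ (k : ℝ) - d ≤ L := by simpa [D, Nat.lt_succ_iff] using hd
    have hdown : ∀ S ∈ 𝒜, ∀ E ⊆ S, #E = d →
        E ∈ {E ∈ U.powersetCard d | x ≤ matchingNumber E} := by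
      intro S hS E hES hEd
      obtain ⟨hSU, hSk⟩ := mem_powersetCard.1 (mem_filter.1 hS).1
      refine mem_filter.2 ⟨mem_powersetCard.2 ⟨hES.trans hSU, hEd⟩, ?_⟩
      have hdrop := matchingNumber_le_add_card_sdiff S E
      rw [card_sdiff_of_subset hES, hSk, hEd] at hdrop
      have : (matchingNumber S : ℝ) ≤ matchingNumber E + ((k : ℝ) - d) := by
        rw [← Nat.cast_sub hdk]
        exact_mod_cast hdrop
      linarith [(mem_filter.1 hS).2]
    convert card_filter_card_image_mul_le (filter_subset _ _) (filter_subset _ _) hdk hdown using 3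
    rw [filter_filter]
    refine filter_congr fun f hf => ?_
    simp only [mem_filter, mem_powersetCard, image_subset_iff, mem_univ,
      mem_piFinset.1 hf, implies_true, true_and, and_comm]
  calc #{f ∈ Ω | (k : ℝ) - #(univ.image f) ≤ L} * #𝒜
      = ∑ d ∈ D, #{f ∈ Ω | #(univ.image f) = d} * #𝒜 := by
        rw [← sum_mul, sum_card_fiberwise_eq_card_filter, hD]
    _ ≤ ∑ d ∈ D, #{f ∈ {f ∈ Ω | x ≤ matchingNumber (univ.image f)} | #(univ.image f) = d} *
          (#U).choose k := sum_le_sum hfiber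
    _ ≤ #{f ∈ Ω | x ≤ matchingNumber (univ.image f)} * (#U).choose k := by
        rw [← sum_mul, sum_card_fiberwise_eq_card_filter]
        gcongr
        exact filter_subset _ _

lemma edgeSamples_eq_piFinset (n m : ℕ) :
    edgeSamples n m = piFinset fun _ : Fin m => univ.powersetCard 2 := by
  ext f
  simp [edgeSamples]

lemma erGraphs_eq_powersetCard (n m : ℕ) :
    erGraphs n m = (univ.powersetCard 2 : Finset (Finset (Fin n))).powersetCard m := by
  ext E
  simp [erGraphs, mem_powersetCard, subset_iff]

lemma uprob_eq {α : Type*} [DecidableEq α] (Ω : Finset α) (p : α → Prop) [DecidablePred p] :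
    uprob Ω p = #{a ∈ Ω | p a} / #Ω := by
  unfold uprob
  rw [filter_congr_decidable]

/-- **Lemma D.3.** For every `x`, the maximum matching size `μ^r(n,n)` of a
with-replacement random graph and the maximum matching size `μ(n,n)` of an
Erdős–Rényi graph `G_{n,n}` satisfy
`Pr[μ^r(n,n) ≥ x] ≥ Pr[μ(n,n) ≥ x + log n]·(1 - 1/log n)`. -/
theorem matching_with_replacement_vs_erdos_renyi (n : ℕ) (x : ℝ) :
    uprob (edgeSamples n n) (fun f =>
        (matchingNumber (Finset.univ.image f) : ℝ) ≥ x) ≥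
      uprob (erGraphs n n) (fun E => (matchingNumber E : ℝ) ≥ x + Real.log n) *
        (1 - 1 / Real.log n) := by
  simp only [ge_iff_le]
  rw [uprob_eq, uprob_eq, edgeSamples_eq_piFinset, erGraphs_eq_powersetCard, card_powersetCard]
  set U : Finset (Finset (Fin n)) := univ.powersetCard 2
  have hU : #U = n.choose 2 := by simp [U]
  have hnear := card_mul_one_sub_inv_log_le_card_filter U n hU.ge
  have hcompare := card_filter_sub_le_mul_card_le U n x (Real.log n)
  have hchoose : (#U).choose n ≤ #(piFinset fun _ : Fin n => U) := by
    simpa using Nat.choose_le_pow #U n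
  rcases Nat.eq_zero_or_pos ((#U).choose n) with hzero | hpos
  · -- no Erdős–Rényi graphs at all, and `uprob` reads `0 / 0 = 0`
    simp only [hzero, Nat.cast_zero, div_zero, zero_mul]
    positivity
  rw [div_mul_eq_mul_div, div_le_div_iff₀ (by exact_mod_cast hpos)
    (by exact_mod_cast hpos.trans_le hchoose)]
  have hcompare' := (Nat.cast_le (α := ℝ)).2 hcompare
  push_cast at hcompare'
  nlinarith [mul_le_mul_of_nonneg_left hnear
    (Nat.cast_nonneg (α := ℝ) #{S ∈ U.powersetCard n | x + Real.log n ≤ matchingNumber S})]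
end

section
/- Let d ∈ ℕ, n ≥ 2d², and r ∈ {1, …, n}. Then |C(r, d)/C(n, d) − (r/n)^d| ≤ 2d²/n, where C(a, b) denotes the binomial coefficient 'a choose b'. -/
open Finset

lemma abs_prod_sub_prod_le (k : ℕ) (f g : ℕ → ℝ)
    (hf : ∀ i ∈ Finset.range k, |f i| ≤ 1) (hg : ∀ i ∈ Finset.range k, |g i| ≤ 1) :
    |∏ i ∈ Finset.range k, f i - ∏ i ∈ Finset.range k, g i| ≤
      ∑ i ∈ Finset.range k, |f i - g i| := by
  induction k with
  | zero => simp
  | succ k ih =>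
    have hsub : ∀ i ∈ Finset.range k, i ∈ Finset.range (k+1) := by
      intro i hi; simp at hi ⊢; omega
    have h1 := ih (fun i hi => hf i (hsub i hi)) (fun i hi => hg i (hsub i hi))
    rw [Finset.prod_range_succ, Finset.prod_range_succ, Finset.sum_range_succ]
    set P := ∏ i ∈ Finset.range k, f i
    set Q := ∏ i ∈ Finset.range k, g i
    have hQ : |Q| ≤ 1 := by
      rw [Finset.abs_prod]
      exact Finset.prod_le_one (fun i _ => abs_nonneg _)
        (fun i hi => hg i (hsub i hi))
    have hfk : |f k| ≤ 1 := hf k (by simp)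
    have key : P * f k - Q * g k = (P - Q) * f k + Q * (f k - g k) := by ring
    calc |P * f k - Q * g k| = |(P - Q) * f k + Q * (f k - g k)| := by rw [key]
      _ ≤ |(P - Q) * f k| + |Q * (f k - g k)| := abs_add_le _ _
      _ = |P - Q| * |f k| + |Q| * |f k - g k| := by rw [abs_mul, abs_mul]
      _ ≤ |P - Q| * 1 + 1 * |f k - g k| :=
          add_le_add (mul_le_mul_of_nonneg_left hfk (abs_nonneg _))
            (mul_le_mul_of_nonneg_right hQ (abs_nonneg _))
      _ ≤ (∑ i ∈ Finset.range k, |f i - g i|) + |f k - g k| := by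
          rw [mul_one, one_mul]; gcongr

/-- **Lemma C.1.** For `d ∈ ℕ`, `n ≥ 2d²` and `r ∈ {1, …, n}`,
`|C(r,d)/C(n,d) − (r/n)^d| ≤ 2d²/n`. -/
theorem choose_ratio_approx (d n r : ℕ) (hn : 2 * d ^ 2 ≤ n)
    (hr1 : 1 ≤ r) (hrn : r ≤ n) :
    |(r.choose d : ℝ) / (n.choose d : ℝ) - ((r : ℝ) / n) ^ d| ≤
      2 * d ^ 2 / n := by
  rcases Nat.eq_zero_or_pos d with hd | hd
  · subst hd; simp
  have hn0 : 0 < n := lt_of_lt_of_le (by positivity) hn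
  have hnR : (0:ℝ) < n := by exact_mod_cast hn0
  have hrR : (0:ℝ) < r := by exact_mod_cast hr1
  have hrn' : (r:ℝ) ≤ n := by exact_mod_cast hrn
  have hdR : (0:ℝ) < d := by exact_mod_cast hd
  have hnd : 2 * (d:ℝ)^2 ≤ n := by exact_mod_cast hn
  rcases lt_or_ge r d with hrd | hdr
  · -- r < d : choose r d = 0
    rw [Nat.choose_eq_zero_of_lt hrd]
    simp only [Nat.cast_zero, zero_div, zero_sub, abs_neg]
    have h1 : |((r:ℝ)/n)^d| = ((r:ℝ)/n)^d := abs_of_nonneg (by positivity)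
    rw [h1]
    have h2 : ((r:ℝ)/n)^d ≤ ((r:ℝ)/n)^1 := by
      apply pow_le_pow_of_le_one (by positivity) (by
        rw [div_le_one hnR]; exact hrn') hd
    rw [pow_one] at h2
    refine h2.trans ?_
    have hr2 : (r:ℝ) ≤ 2 * (d:ℝ)^2 := by
      have hrdR : (r:ℝ) < d := by exact_mod_cast hrd
      have hd1 : (1:ℝ) ≤ d := by exact_mod_cast hd
      nlinarith [mul_nonneg (by linarith : (0:ℝ) ≤ (d:ℝ) - 1) hdR.le]
    gcongr
  · -- d ≤ r ≤ n
    have hdnn : d ≤ n := le_trans hdr hrn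
    have key : (r.choose d : ℝ) / (n.choose d : ℝ) =
        ∏ i ∈ Finset.range d, (((r:ℝ) - i) / ((n:ℝ) - i)) := by
      rw [Finset.prod_div_distrib]
      have hr' : ((r.descFactorial d : ℕ) : ℝ) = ∏ i ∈ Finset.range d, ((r:ℝ) - i) := by
        rw [Nat.descFactorial_eq_prod_range, Nat.cast_prod]
        refine Finset.prod_congr rfl fun i hi => ?_
        simp at hi
        rw [Nat.cast_sub (le_trans (le_of_lt hi) hdr)]
      have hn' : ((n.descFactorial d : ℕ) : ℝ) = ∏ i ∈ Finset.range d, ((n:ℝ) - i) := by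
        rw [Nat.descFactorial_eq_prod_range, Nat.cast_prod]
        refine Finset.prod_congr rfl fun i hi => ?_
        simp at hi
        rw [Nat.cast_sub (le_trans (le_of_lt hi) hdnn)]
      rw [← hr', ← hn', Nat.descFactorial_eq_factorial_mul_choose,
        Nat.descFactorial_eq_factorial_mul_choose]
      push_cast
      rw [mul_div_mul_left]
      exact Nat.cast_ne_zero.mpr d.factorial_ne_zero
    have gform : ((r:ℝ)/n)^d = ∏ i ∈ Finset.range d, ((r:ℝ)/n) := by
      rw [Finset.prod_const, Finset.card_range]
    rw [key, gform]
    have hni : ∀ i ∈ Finset.range d, (0:ℝ) < (n:ℝ) - i := by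
      intro i hi
      simp at hi
      have h1 : (i : ℝ) < d := by exact_mod_cast hi
      have h2 : (d : ℝ) ≤ n := by exact_mod_cast hdnn
      linarith
    have hf : ∀ i ∈ Finset.range d, |((r:ℝ) - i) / ((n:ℝ) - i)| ≤ 1 := by
      intro i hi
      have h1 := hni i hi
      simp at hi
      have hir : (i:ℝ) < r := by
        have : i < r := lt_of_lt_of_le hi hdr
        exact_mod_cast this
      rw [abs_of_nonneg (div_nonneg (by linarith) h1.le), div_le_one h1]
      linarith
    have hg : ∀ i ∈ Finset.range d, |(r:ℝ)/n| ≤ 1 := by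
      intro i _
      rw [abs_of_nonneg (by positivity), div_le_one hnR]
      exact hrn'
    refine (abs_prod_sub_prod_le d _ _ hf hg).trans ?_
    have hbound : ∀ i ∈ Finset.range d,
        |((r:ℝ) - i) / ((n:ℝ) - i) - (r:ℝ)/n| ≤ 2 * d / n := by
      intro i hi
      have h1 := hni i hi
      simp at hi
      have hi1 : (i:ℝ) + 1 ≤ d := by exact_mod_cast hi
      have hi0 : (0:ℝ) ≤ i := by positivity
      have heq : ((r:ℝ) - i) / ((n:ℝ) - i) - (r:ℝ)/n
          = -((i:ℝ) * ((n:ℝ) - r)) / (((n:ℝ) - i) * n) := by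
        field_simp
        ring
      rw [heq, abs_div, abs_neg,
        abs_of_nonneg (mul_nonneg hi0 (by linarith)),
        abs_of_pos (mul_pos h1 hnR),
        div_le_div_iff₀ (mul_pos h1 hnR) hnR]
      have hstep : (i:ℝ) * ((n:ℝ) - r) ≤ 2 * d * ((n:ℝ) - i) := by
        nlinarith [mul_nonneg hnR.le (by linarith : (0:ℝ) ≤ 2*(d:ℝ) - 1 - i),
          mul_nonneg hi0 hrR.le,
          mul_le_mul_of_nonneg_left hi1 (by linarith : (0:ℝ) ≤ 2*(d:ℝ))]
      nlinarith [mul_le_mul_of_nonneg_right hstep hnR.le]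
    refine (Finset.sum_le_sum hbound).trans ?_
    rw [Finset.sum_const, Finset.card_range, nsmul_eq_mul]
    exact le_of_eq (by ring)
end

section
/- Let n, m ∈ ℕ, m ≥ d_1 ≥ d_2 ≥ … ≥ d_n ≥ 1, and let B be drawn from GenR(n, m, d_1, …, d_n). Let S = {w_1, …, w_k} ⊆ L be any fixed set of k left nodes and H_k = {u_1, …, u_k} the set of the k left nodes of highest degree. Then |N(S)| is stochastically dominated by |N(H_k)|: for every x, Pr[|N(S)| ≥ x] ≤ Pr[|N(H_k)| ≥ x]. -/
open Finset

/-- The sample space of the random model `GenR(n, m, d_1, …, d_n)`: all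
neighborhood maps with `n` left nodes and `m` right nodes in which the `i`-th
left node has exactly `d i` neighbors. -/
def genGraphs (n m : ℕ) (d : Fin n → ℕ) : Finset (Fin n → Finset (Fin m)) :=
  Finset.univ.filter fun N => ∀ i, (N i).card = d i

/-- Expectation of `f` under the model `GenR(n, m, d_1, …, d_n)`
(uniform distribution on `genGraphs n m d`). -/
noncomputable def genExp (n m : ℕ) (d : Fin n → ℕ)
    (f : (Fin n → Finset (Fin m)) → ℝ) : ℝ :=
  (∑ N ∈ genGraphs n m d, f N) / (genGraphs n m d).card

open scoped Classical in
/-- Probability of the event `p` under the model `GenR(n, m, d_1, …, d_n)`. -/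
noncomputable def genProb (n m : ℕ) (d : Fin n → ℕ)
    (p : (Fin n → Finset (Fin m)) → Prop) : ℝ :=
  ((genGraphs n m d).filter p).card / (genGraphs n m d).card

/-- The first `k` left nodes `{u_1, …, u_k}`; when the degrees are sorted in
decreasing order these are the `k` left nodes of largest degree. -/
def firstK (n k : ℕ) : Finset (Fin n) :=
  Finset.univ.filter fun i : Fin n => (i : ℕ) < k

/-!
Replacing a node `s ∈ S \ H_k` by a node `j ∈ H_k \ S` (so `d j ≥ d s`) can only increase
`Pr[|N(S)| ≥ x]`. Indeed, conditioned on all neighbourhoods except those of `s` and `j`, and with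
`U` the union of those of the other nodes of `S`, the event asks that a uniform `d s`-subset (before the swap), resp.
`d j`-subset (after it), of the right side lie in the upper set `{A | |A ∪ U| ≥ x}`; and the
density of an upper set in the `a`-th layer of the Boolean lattice is nondecreasing in `a`, by
double counting the pairs `A ⊆ B` between two layers. Finitely many swaps turn `S` into `H_k`.
-/

section UpperSetDensity

variable {α : Type*} [Fintype α] [DecidableEq α] {P : Finset α → Prop} [DecidablePred P]

theorem card_filter_powersetCard_mul_choose_le (hP : Monotone P) {a b : ℕ} (hab : a ≤ b) :
    #{A ∈ powersetCard a univ | P A} * (Fintype.card α).choose b ≤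
      #{B ∈ powersetCard b univ | P B} * (Fintype.card α).choose a := by
  set m := Fintype.card α
  have hdouble : #{A ∈ powersetCard a univ | P A} * (m - a).choose (b - a) ≤
      #{B ∈ powersetCard b univ | P B} * b.choose a := by
    refine card_mul_le_card_mul (· ⊆ ·) (fun A hA => ?_) (fun B hB => ?_)
    · obtain ⟨hAcard, hPA⟩ : #A = a ∧ P A := by simpa using hA
      have hcompl : #(univ \ A) = m - a := by rw [card_univ_sdiff, hAcard]
      rw [← hcompl, ← card_powersetCard]
      refine card_le_card_of_injOn (A ∪ ·) (fun E hE => ?_) (fun E hE F hF hEF => ?_)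
      · obtain ⟨hEA, hEcard⟩ := mem_powersetCard.mp hE
        have hdisj : Disjoint A E := disjoint_of_subset_right hEA disjoint_sdiff
        simp only [bipartiteAbove, mem_coe, mem_filter, mem_powersetCard,
          card_union_of_disjoint hdisj]
        exact ⟨⟨⟨subset_univ _, by omega⟩, hP subset_union_left hPA⟩, subset_union_left⟩
      · have hdisj : ∀ E ∈ powersetCard (b - a) (univ \ A), Disjoint A E := fun E hE =>
          disjoint_of_subset_right (mem_powersetCard.mp hE).1 disjoint_sdiff
        simpa [union_sdiff_cancel_left (hdisj E hE), union_sdiff_cancel_left (hdisj F hF)]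
          using congrArg (· \ A) hEF
    · have hBcard : #B = b := (mem_powersetCard.mp (mem_filter.mp hB).1).2
      rw [← hBcard, ← card_powersetCard]
      refine card_le_card fun A hA => ?_
      simp only [bipartiteBelow, mem_filter, mem_powersetCard] at hA ⊢
      exact ⟨hA.2, hA.1.1.2⟩
  refine Nat.le_of_mul_le_mul_right ?_ (Nat.choose_pos hab)
  calc #{A ∈ powersetCard a univ | P A} * m.choose b * b.choose a
      = #{A ∈ powersetCard a univ | P A} * (m - a).choose (b - a) * m.choose a := by
        rw [mul_assoc, Nat.choose_mul hab]; ring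
    _ ≤ #{B ∈ powersetCard b univ | P B} * b.choose a * m.choose a := by gcongr
    _ = _ := by ring

end UpperSetDensity

section GenGraphs

open Function

variable {n m : ℕ} {d : Fin n → ℕ}

lemma card_filter_genGraphs_eq_sum {s j : Fin n} (hsj : s ≠ j)
    (Q : (Fin n → Finset (Fin m)) → Prop) [DecidablePred Q] :
    #{N ∈ genGraphs n m d | Q N} =
      ∑ R ∈ genGraphs n m (update (update d s 0) j 0),
        #{p ∈ powersetCard (d s) univ ×ˢ powersetCard (d j) univ |
          Q (update (update R s p.1) j p.2)} := by
  have hglue : ∀ N : Fin n → Finset (Fin m),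
      update (update (update (update N s ∅) j ∅) s (N s)) j (N j) = N := by
    intro N; ext i : 1; by_cases his : i = s <;> by_cases hij : i = j <;> simp_all
  rw [← card_sigma]
  refine card_nbij' (fun N => ⟨update (update N s ∅) j ∅, (N s, N j)⟩)
    (fun q => update (update q.1 s q.2.1) j q.2.2) ?_ ?_ ?_ ?_
  · intro N hN
    simp only [genGraphs, coe_filter, mem_filter, mem_univ, true_and] at hN
    simp only [genGraphs, coe_sigma, Set.mem_sigma_iff, mem_coe, mem_filter, mem_univ, true_and,
      mem_product, mem_powersetCard, subset_univ, hglue]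
    refine ⟨fun i => ?_, ⟨hN.1 s, hN.1 j⟩, hN.2⟩
    by_cases his : i = s <;> by_cases hij : i = j <;> simp_all
  · rintro ⟨R, A, B⟩ hq
    simp only [genGraphs, coe_sigma, Set.mem_sigma_iff, mem_coe, mem_filter, mem_univ, true_and,
      mem_product, mem_powersetCard, subset_univ] at hq
    obtain ⟨hR, ⟨hA, hB⟩, hQ⟩ := hq
    simp only [genGraphs, coe_filter, mem_filter, mem_univ, true_and]
    refine ⟨fun i => ?_, hQ⟩
    have := hR i
    by_cases his : i = s <;> by_cases hij : i = j <;> simp_all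
  · intro N _
    exact hglue N
  · rintro ⟨R, A, B⟩ hq
    simp only [genGraphs, coe_sigma, Set.mem_sigma_iff, mem_coe, mem_filter, mem_univ,
      true_and] at hq
    have hRs : R s = ∅ := card_eq_zero.mp (by simpa [hsj] using hq.1 s)
    have hRj : R j = ∅ := card_eq_zero.mp (by simpa using hq.1 j)
    simp only [Sigma.mk.injEq, Prod.mk.injEq, heq_eq_eq]
    refine ⟨?_, by simp [hsj], by simp⟩
    ext i : 1
    by_cases his : i = s <;> by_cases hij : i = j <;> simp_all

variable {P : Finset (Fin m) → Prop} [DecidablePred P]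

lemma biUnion_update_update_of_mem {T : Finset (Fin n)} {s j : Fin n} (hs : s ∈ T) (hj : j ∉ T)
    (R : Fin n → Finset (Fin m)) (A B : Finset (Fin m)) :
    T.biUnion (update (update R s A) j B) = A ∪ (T.erase s).biUnion R := by
  have hsj : s ≠ j := ne_of_mem_of_not_mem hs hj
  rw [← insert_erase hs, biUnion_insert, erase_insert (notMem_erase s T)]
  refine congrArg₂ (· ∪ ·) (by simp [hsj]) (biUnion_congr rfl fun i hi => ?_)
  have his : i ≠ s := ne_of_mem_erase hi
  have hij : i ≠ j := ne_of_mem_of_not_mem (mem_of_mem_erase hi) hj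
  simp [his, hij]

lemma card_filter_genGraphs_biUnion_le_exchange (hP : Monotone P) {T : Finset (Fin n)}
    {s j : Fin n} (hs : s ∈ T) (hj : j ∉ T) (hd : d s ≤ d j) :
    #{N ∈ genGraphs n m d | P (T.biUnion N)} ≤
      #{N ∈ genGraphs n m d | P ((insert j (T.erase s)).biUnion N)} := by
  have hsj : s ≠ j := ne_of_mem_of_not_mem hs hj
  have hT' : ∀ (R : Fin n → Finset (Fin m)) (A B : Finset (Fin m)),
      (insert j (T.erase s)).biUnion (update (update R s A) j B) = B ∪ (T.erase s).biUnion R := by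
    intro R A B
    rw [update_comm hsj, biUnion_update_update_of_mem (mem_insert_self j _) (by simp [hsj]),
      erase_insert fun h => hj (mem_of_mem_erase h)]
  rw [card_filter_genGraphs_eq_sum hsj, card_filter_genGraphs_eq_sum hsj]
  refine sum_le_sum fun R _ => ?_
  set U := (T.erase s).biUnion R
  simp only [biUnion_update_update_of_mem hs hj, hT']
  rw [filter_product_left (fun A => P (A ∪ U)), filter_product_right (fun B => P (B ∪ U)),
    card_product, card_product, card_powersetCard, card_powersetCard, card_univ, Fintype.card_fin]
  simpa only [Fintype.card_fin, mul_comm (m.choose (d s))] using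
    card_filter_powersetCard_mul_choose_le (P := fun A => P (A ∪ U))
      (fun A B hAB => hP (union_subset_union_left hAB)) hd

lemma card_filter_genGraphs_biUnion_le_of_forall_le (hP : Monotone P) {T H : Finset (Fin n)}
    (hcard : #T = #H) (hH : ∀ s ∉ H, ∀ j ∈ H, d s ≤ d j) :
    #{N ∈ genGraphs n m d | P (T.biUnion N)} ≤ #{N ∈ genGraphs n m d | P (H.biUnion N)} := by
  induction hr : #(T \ H) generalizing T with
  | zero =>
    rw [eq_of_subset_of_card_le (sdiff_eq_empty_iff_subset.mp (card_eq_zero.mp hr)) hcard.ge]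
  | succ r ih =>
    obtain ⟨s, hs⟩ : (T \ H).Nonempty := card_pos.mp (by omega)
    obtain ⟨j, hj⟩ : (H \ T).Nonempty := card_pos.mp (by rw [← card_sdiff_comm hcard]; omega)
    rw [mem_sdiff] at hs hj
    refine (card_filter_genGraphs_biUnion_le_exchange hP hs.1 hj.2 (hH s hs.2 j hj.1)).trans
      (ih ?_ ?_)
    · rw [card_insert_of_notMem fun h => hj.2 (mem_of_mem_erase h), card_erase_of_mem hs.1,
        hcard]
      exact Nat.sub_add_cancel (card_pos.mpr ⟨j, hj.1⟩)
    · rw [insert_sdiff_of_mem _ hj.1, erase_sdiff_comm, card_erase_of_mem (mem_sdiff.mpr hs), hr,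
        Nat.add_sub_cancel]

end GenGraphs

lemma card_firstK {n k : ℕ} (hk : k ≤ n) : #(firstK n k) = k :=
  Fin.card_filter_val_lt.trans (min_eq_right hk)

lemma Antitone.le_of_notMem_firstK {n k : ℕ} {d : Fin n → ℕ} (hd : Antitone d) {s j : Fin n}
    (hs : s ∉ firstK n k) (hj : j ∈ firstK n k) : d s ≤ d j := by
  simp only [firstK, mem_filter, mem_univ, true_and, not_lt] at hs hj
  exact hd (Fin.le_def.mpr (by omega))

theorem fixed_set_dominated_by_top_degrees_general (n m : ℕ) (d : Fin n → ℕ)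
    (hmono : Antitone d)
    (k : ℕ) (S : Finset (Fin n)) (hS : S.card = k) (x : ℝ) :
    genProb n m d (fun N => ((S.biUnion N).card : ℝ) ≥ x) ≤
      genProb n m d (fun N => (((firstK n k).biUnion N).card : ℝ) ≥ x) := by
  have hk : k ≤ n := by simpa [hS] using card_le_univ S
  refine div_le_div_of_nonneg_right ?_ (Nat.cast_nonneg _)
  exact Nat.cast_le.mpr <|
    card_filter_genGraphs_biUnion_le_of_forall_le (P := fun V => (#V : ℝ) ≥ x)
    (fun V W hVW hV => hV.trans (Nat.cast_le.mpr (card_le_card hVW)))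
    (hS.trans (card_firstK hk).symm) fun _ hs _ hj => hmono.le_of_notMem_firstK hs hj

/-- **Lemma B.12.** Under `GenR(n, m, d_1, …, d_n)` with
`m ≥ d_1 ≥ … ≥ d_n ≥ 1`, the coverage `|N(S)|` of any fixed set `S` of `k`
left nodes is stochastically dominated by the coverage `|N(H_k)|` of the set
`H_k` of the `k` left nodes of largest degree:
`Pr[|N(S)| ≥ x] ≤ Pr[|N(H_k)| ≥ x]` for every `x`. -/
theorem fixed_set_dominated_by_top_degrees (n m : ℕ) (d : Fin n → ℕ)
    (hmono : Antitone d) (hd1 : ∀ i, 1 ≤ d i) (hdm : ∀ i, d i ≤ m)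
    (k : ℕ) (S : Finset (Fin n)) (hS : S.card = k) (x : ℝ) :
    genProb n m d (fun N => ((S.biUnion N).card : ℝ) ≥ x) ≤
      genProb n m d (fun N => (((firstK n k).biUnion N).card : ℝ) ≥ x) :=
  fixed_set_dominated_by_top_degrees_general n m d hmono k S hS x
end
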